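/- arXiv:2507.20898 — 3 statements merged into one kernel-verified Lean document; each statement's English description precedes it below -/
import Mathlib

section
/- Let v be the unique C¹ solution of the N-NLL system. Then the control α defined by α(t,x,μ) = â(x,μ, Δ_x v(t,·,μ)) is admissible and is the unique Markov perfect equilibrium: α*(α) = α, and every α′ ∈ 𝒜 with α*(α′) = α′ coincides with α. -/
open scoped BigOperators Classical

noncomputable section

namespace NLLGame

/-- Map the `i`-th off-diagonal index to the corresponding state `y ≠ x`
(the paper's convention: `a_y` for `y < x` and `a_{y-1}` for `y > x`). -/
def idxToState {d : ℕ} (x : Fin d) (i : Fin (d - 1)) : Fin d :=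
  if h : (i : ℕ) < (x : ℕ) then ⟨(i : ℕ), Nat.lt_trans h x.isLt⟩
  else ⟨(i : ℕ) + 1, by have := i.isLt; omega⟩

/-- The discretized simplex `Σ^{d-1}_N`, represented by the vector of counts
`n_x = N μ_x` of the `N` untagged players across the `d` states. -/
def Simplex (d N : ℕ) : Type := {f : Fin d → Fin (N + 1) // ∑ x, (f x : ℕ) = N}

instance (d N : ℕ) : Fintype (Simplex d N) := by unfold Simplex; infer_instance
instance (d N : ℕ) : DecidableEq (Simplex d N) := by unfold Simplex; infer_instance

/-- The state space `𝒮 = 𝒳 × Σ^{d-1}_N`. -/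
abbrev State (d N : ℕ) := Fin d × Simplex d N

/-- `shift μ y z = μ + e_{y,z} = μ + (e_y - e_z)/N` in the count representation;
it defaults to `μ` when the shifted measure leaves the simplex (such terms are
multiplied by a vanishing coefficient in the generators below). -/
def shift {d N : ℕ} (μ : Simplex d N) (y z : Fin d) : Simplex d N :=
  if h : ∃ σ : Simplex d N, ∀ w,
      (σ.1 w : ℕ) + (if w = z then 1 else 0) = (μ.1 w : ℕ) + (if w = y then 1 else 0)
  then h.choose else μ

/-- Rate vectors `a ∈ ℝ^{d-1}`. -/
abbrev Vec (d : ℕ) := Fin (d - 1) → ℝ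

def sqnorm {k : ℕ} (a : Fin k → ℝ) : ℝ := ∑ i, a i ^ 2

def norm2 {k : ℕ} (a : Fin k → ℝ) : ℝ := Real.sqrt (sqnorm a)

/-- Feedback controls. -/
abbrev Ctrl (d N : ℕ) := ℝ → State d N → Vec d

/-- Admissible controls `𝒜`: nonnegative and Lipschitz (in time) on `[0,T]`. -/
def Admissible {d N : ℕ} (T : ℝ) (α : Ctrl d N) : Prop :=
  (∀ t ∈ Set.Icc (0:ℝ) T, ∀ s i, 0 ≤ α t s i) ∧
  ∃ K : NNReal, ∀ s i, LipschitzOnWith K (fun t => α t s i) (Set.Icc (0:ℝ) T)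

variable {d N : ℕ}

/-- First difference vector `Δ_x φ = (φ(y) - φ(x))_{y ≠ x}`. -/
def delta (x : Fin d) (φ : Fin d → ℝ) : Vec d :=
  fun i => φ (idxToState x i) - φ x

/-- `γ`-strong convexity of the running cost in the control variable. -/
def StronglyConvex (ℓ : State d N → Vec d → ℝ) (γ : ℝ) : Prop :=
  ∀ s : State d N, ∀ a a' : Vec d, (∀ i, 0 ≤ a i) → (∀ i, 0 ≤ a' i) →
    ∀ τ ∈ Set.Icc (0:ℝ) 1,
      γ * τ * (1 - τ) * sqnorm (fun i => a' i - a i) ≤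
        τ * ℓ s a' + (1 - τ) * ℓ s a - ℓ s (fun i => τ * a' i + (1 - τ) * a i)

/-- The Hamiltonian `H(x,μ,p)`. -/
def ham (lam0 lam1 : State d N → Vec d) (ℓ : State d N → Vec d → ℝ)
    (s : State d N) (p : Vec d) : ℝ :=
  sInf ((fun a => ℓ s a + ∑ i, (lam0 s i + lam1 s i * a i) * p i) ''
    {a : Vec d | ∀ i, 0 ≤ a i})

/-- `a` is the minimizer defining `â(x,μ,p)`. -/
def IsArgmin (lam1 : State d N → Vec d) (ℓ : State d N → Vec d → ℝ)
    (s : State d N) (p : Vec d) (a : Vec d) : Prop :=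
  (∀ i, 0 ≤ a i) ∧ ∀ b : Vec d, (∀ i, 0 ≤ b i) →
    ℓ s a + ∑ i, lam1 s i * a i * p i ≤ ℓ s b + ∑ i, lam1 s i * b i * p i

/-- The minimizer `â(x,μ,p)` (via choice; well defined under strong convexity). -/
def hatAlpha (lam1 : State d N → Vec d) (ℓ : State d N → Vec d → ℝ)
    (s : State d N) (p : Vec d) : Vec d :=
  if h : ∃ a, IsArgmin lam1 ℓ s p a then h.choose else 0

/-- Mean-field part `𝓛^β_μ` of the generator. -/
def genMu (lam0 lam1 : State d N → Vec d) (β : Ctrl d N)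
    (ψ : ℝ → State d N → ℝ) (t : ℝ) (s : State d N) : ℝ :=
  ∑ z : Fin d, ∑ i : Fin (d - 1),
    ((s.2.1 z : ℕ) : ℝ) *
      ((lam0 (z, shift s.2 s.1 z) i + lam1 (z, shift s.2 s.1 z) i * β t (z, shift s.2 s.1 z) i) *
        (ψ t (s.1, shift s.2 (idxToState z i) z) - ψ t s))

/-- Tagged-player part `𝓛^γ_x` of the generator. -/
def genX (lam0 lam1 : State d N → Vec d) (γc : Ctrl d N)
    (ψ : ℝ → State d N → ℝ) (t : ℝ) (s : State d N) : ℝ :=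
  ∑ i, (lam0 s i + lam1 s i * γc t s i) * (ψ t (idxToState s.1 i, s.2) - ψ t s)

/-- `v` is a C¹ solution of the dynamic programming equation `HJB(β)`. -/
def IsHJBSol (T : ℝ) (lam0 lam1 : State d N → Vec d) (ℓ : State d N → Vec d → ℝ)
    (g : State d N → ℝ) (β : Ctrl d N) (v : ℝ → State d N → ℝ) : Prop :=
  (∀ s, v T s = g s) ∧
  ∀ t ∈ Set.Icc (0:ℝ) T, ∀ s,
    HasDerivWithinAt (fun u => v u s)
      (-(ham lam0 lam1 ℓ s (delta s.1 fun y => v t (y, s.2)) + genMu lam0 lam1 β v t s))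
      (Set.Icc (0:ℝ) T) t

/-- `α` is the best response associated with the value function `v`, i.e.
`α(t,x,μ) = â(x,μ,Δ_x v(t,·,μ))` on `[0,T] × 𝒮`. -/
def IsBR (T : ℝ) (lam1 : State d N → Vec d) (ℓ : State d N → Vec d → ℝ)
    (v : ℝ → State d N → ℝ) (α : Ctrl d N) : Prop :=
  ∀ t ∈ Set.Icc (0:ℝ) T, ∀ s, IsArgmin lam1 ℓ s (delta s.1 fun y => v t (y, s.2)) (α t s)

/-- `v` is a C¹ solution of the `N`-NLL system. -/
def IsNLLSol (T : ℝ) (lam0 lam1 : State d N → Vec d) (ℓ : State d N → Vec d → ℝ)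
    (g : State d N → ℝ) (v : ℝ → State d N → ℝ) : Prop :=
  (∀ s, v T s = g s) ∧
  ∃ α : Ctrl d N, IsBR T lam1 ℓ v α ∧
    ∀ t ∈ Set.Icc (0:ℝ) T, ∀ s,
      HasDerivWithinAt (fun u => v u s)
        (-(ham lam0 lam1 ℓ s (delta s.1 fun y => v t (y, s.2)) + genMu lam0 lam1 α v t s))
        (Set.Icc (0:ℝ) T) t

/-- Markov perfect equilibrium: `α ∈ 𝒜` with `α*(α) = α`. -/
def IsMPE (T : ℝ) (lam0 lam1 : State d N → Vec d) (ℓ : State d N → Vec d → ℝ)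
    (g : State d N → ℝ) (α : Ctrl d N) : Prop :=
  Admissible T α ∧
  ∃ v : ℝ → State d N → ℝ, IsHJBSol T lam0 lam1 ℓ g α v ∧ IsBR T lam1 ℓ v α

/-- `‖λ¹‖_∞`. -/
def lamInf (lam1 : State d N → Vec d) : ℝ :=
  sSup (Set.range fun p : State d N × Fin (d - 1) => lam1 p.1 p.2)

/-- `c_v = max_{(x,μ)} (T ℓ(x,μ,0) + g(x,μ))`. -/
def cV (T : ℝ) (ℓ : State d N → Vec d → ℝ) (g : State d N → ℝ) : ℝ :=
  sSup (Set.range fun s : State d N => T * ℓ s 0 + g s)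

/-- `c_a = max_{(x,μ)} |â(x,μ,0)|₂ + 2 √(d-1) ‖λ¹‖_∞ c_v / γ`. -/
def cA (T : ℝ) (lam1 : State d N → Vec d) (ℓ : State d N → Vec d → ℝ)
    (g : State d N → ℝ) (γ : ℝ) : ℝ :=
  sSup (Set.range fun s : State d N => norm2 (hatAlpha lam1 ℓ s 0)) +
    2 * Real.sqrt ((d : ℝ) - 1) * lamInf lam1 * cV T ℓ g / γ

/-- `|α(t)|₂²` for a (vector-valued) control. -/
def ctrlNormSq (α : Ctrl d N) (t : ℝ) : ℝ := ∑ s : State d N, ∑ i, α t s i ^ 2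

/-- `|ψ(t)|₂²` for a (real-valued) function on `[0,T] × 𝒮`. -/
def valNormSq (v : ℝ → State d N → ℝ) (t : ℝ) : ℝ := ∑ s : State d N, v t s ^ 2

/-- `‖α‖ = max_{t ∈ [0,T]} |α(t)|₂`. -/
def ctrlSup (T : ℝ) (α : Ctrl d N) : ℝ :=
  sSup ((fun t => Real.sqrt (ctrlNormSq α t)) '' Set.Icc (0:ℝ) T)

/-- `‖v‖ = max_{t ∈ [0,T]} |v(t)|₂`. -/
def valSup (T : ℝ) (v : ℝ → State d N → ℝ) : ℝ :=
  sSup ((fun t => Real.sqrt (valNormSq v t)) '' Set.Icc (0:ℝ) T)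

/-- The restricted class `𝒜*` of admissible controls bounded by `c_a`. -/
def AdmStar (T : ℝ) (lam1 : State d N → Vec d) (ℓ : State d N → Vec d → ℝ)
    (g : State d N → ℝ) (γ : ℝ) (α : Ctrl d N) : Prop :=
  Admissible T α ∧ ∀ t ∈ Set.Icc (0:ℝ) T, Real.sqrt (ctrlNormSq α t) ≤ cA T lam1 ℓ g γ

/-- `j = J^{γ;β}` : the cost of the tagged player using `γc` against `β`. -/
def IsCostSol (T : ℝ) (lam0 lam1 : State d N → Vec d) (ℓ : State d N → Vec d → ℝ)
    (g : State d N → ℝ) (γc β : Ctrl d N) (j : ℝ → State d N → ℝ) : Prop :=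
  (∀ s, j T s = g s) ∧
  ∀ t ∈ Set.Icc (0:ℝ) T, ∀ s,
    HasDerivWithinAt (fun u => j u s)
      (-(ℓ s (γc t s) + genX lam0 lam1 γc j t s + genMu lam0 lam1 β j t s))
      (Set.Icc (0:ℝ) T) t

/-- `γs` is an `ε`-Markov perfect equilibrium. -/
def IsEpsMPE (T : ℝ) (lam0 lam1 : State d N → Vec d) (ℓ : State d N → Vec d → ℝ)
    (g : State d N → ℝ) (eps : ℝ) (γs : Ctrl d N) : Prop :=
  Admissible T γs ∧
  ∀ js, IsCostSol T lam0 lam1 ℓ g γs γs js →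
    ∀ γc, Admissible T γc → ∀ j, IsCostSol T lam0 lam1 ℓ g γc γs j →
      ∀ t ∈ Set.Icc (0:ℝ) T, ∀ s, js t s ≤ j t s + eps

section Aux

variable {d N : ℕ}

lemma sqnorm_nonneg {k : ℕ} (a : Fin k → ℝ) : 0 ≤ sqnorm a :=
  Finset.sum_nonneg fun _ _ => sq_nonneg _

lemma abs_le_sqrt_sqnorm {k : ℕ} (a : Fin k → ℝ) (i : Fin k) :
    |a i| ≤ Real.sqrt (sqnorm a) := by
  rw [← Real.sqrt_sq_eq_abs]
  exact Real.sqrt_le_sqrt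
    (Finset.single_le_sum (fun j _ => sq_nonneg (a j)) (Finset.mem_univ i))

lemma argmin_growth {lam1 : State d N → Vec d} {ℓ : State d N → Vec d → ℝ} {γ : ℝ}
    (hγ : 0 < γ) (hconv : StronglyConvex ℓ γ) {s : State d N} {p a b : Vec d}
    (ha : IsArgmin lam1 ℓ s p a) (hb : ∀ i, 0 ≤ b i) :
    ℓ s a + ∑ i, lam1 s i * a i * p i + (γ/2) * sqnorm (fun i => b i - a i)
      ≤ ℓ s b + ∑ i, lam1 s i * b i * p i := by
  have hmem : ∀ i, 0 ≤ (1/2 : ℝ) * b i + (1 - 1/2 : ℝ) * a i := fun i => by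
    have h1 := ha.1 i; have h2 := hb i; norm_num; linarith
  have h1 := hconv s a b ha.1 hb (1/2) ⟨by norm_num, by norm_num⟩
  have h2 := ha.2 (fun i => (1/2 : ℝ) * b i + (1 - 1/2 : ℝ) * a i) hmem
  have hlin : ∑ i, lam1 s i * ((1/2 : ℝ) * b i + (1 - 1/2 : ℝ) * a i) * p i
      = (1/2) * ∑ i, lam1 s i * b i * p i + (1/2) * ∑ i, lam1 s i * a i * p i := by
    rw [Finset.mul_sum, Finset.mul_sum, ← Finset.sum_add_distrib]
    exact Finset.sum_congr rfl fun i _ => by ring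
  rw [hlin] at h2
  norm_num at h1 h2 ⊢
  nlinarith [h1, h2]

lemma argmin_unique {lam1 : State d N → Vec d} {ℓ : State d N → Vec d → ℝ} {γ : ℝ}
    (hγ : 0 < γ) (hconv : StronglyConvex ℓ γ) {s : State d N} {p a b : Vec d}
    (ha : IsArgmin lam1 ℓ s p a) (hb : IsArgmin lam1 ℓ s p b) : a = b := by
  have h1 := argmin_growth hγ hconv ha hb.1
  have h2 := argmin_growth hγ hconv hb ha.1
  have hsym : sqnorm (fun i => a i - b i) = sqnorm (fun i => b i - a i) :=
    Finset.sum_congr rfl fun i _ => by ring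
  rw [hsym] at h2
  have hS : sqnorm (fun i => b i - a i) = 0 := by
    have := sqnorm_nonneg (fun i => b i - a i); nlinarith
  funext i
  have h3 := abs_le_sqrt_sqnorm (fun i => b i - a i) i
  rw [hS, Real.sqrt_zero] at h3
  have : |b i - a i| ≤ 0 := h3
  have : b i - a i = 0 := abs_nonpos_iff.mp this
  linarith

lemma argmin_lip {lam1 : State d N → Vec d} {ℓ : State d N → Vec d → ℝ} {γ : ℝ}
    (hγ : 0 < γ) (hconv : StronglyConvex ℓ γ) {s : State d N}
    (hl1 : ∀ i, 0 ≤ lam1 s i) {p q a b : Vec d}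
    (ha : IsArgmin lam1 ℓ s p a) (hb : IsArgmin lam1 ℓ s q b) (i : Fin (d-1)) :
    |b i - a i| ≤ (∑ j, lam1 s j * |p j - q j|) / γ := by
  set S := sqnorm (fun i => b i - a i) with hSdef
  have h1 := argmin_growth hγ hconv ha hb.1
  have h2 := argmin_growth hγ hconv hb ha.1
  have hsym : sqnorm (fun i => a i - b i) = S :=
    Finset.sum_congr rfl fun i _ => by ring
  rw [hsym] at h2
  have key : γ * S ≤ ∑ j, lam1 s j * (b j - a j) * (p j - q j) := by
    have e : ∑ j, lam1 s j * (b j - a j) * (p j - q j)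
        = ((∑ j, lam1 s j * b j * p j) - ∑ j, lam1 s j * a j * p j)
          + ((∑ j, lam1 s j * a j * q j) - ∑ j, lam1 s j * b j * q j) := by
      rw [← Finset.sum_sub_distrib, ← Finset.sum_sub_distrib, ← Finset.sum_add_distrib]
      exact Finset.sum_congr rfl fun j _ => by ring
    rw [e]; linarith
  have hR0 : 0 ≤ ∑ j, lam1 s j * |p j - q j| :=
    Finset.sum_nonneg fun j _ => mul_nonneg (hl1 j) (abs_nonneg _)
  have hterm : ∑ j, lam1 s j * (b j - a j) * (p j - q j)
      ≤ Real.sqrt S * ∑ j, lam1 s j * |p j - q j| := by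
    rw [Finset.mul_sum]
    apply Finset.sum_le_sum; intro j _
    have hj := abs_le_sqrt_sqnorm (fun i => b i - a i) j
    calc lam1 s j * (b j - a j) * (p j - q j)
        ≤ |lam1 s j * (b j - a j) * (p j - q j)| := le_abs_self _
      _ = lam1 s j * |b j - a j| * |p j - q j| := by
          rw [abs_mul, abs_mul, abs_of_nonneg (hl1 j)]
      _ ≤ lam1 s j * Real.sqrt S * |p j - q j| := by
          exact mul_le_mul_of_nonneg_right
            (mul_le_mul_of_nonneg_left hj (hl1 j)) (abs_nonneg _)
      _ = Real.sqrt S * (lam1 s j * |p j - q j|) := by ring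
  have hSnn : 0 ≤ S := sqnorm_nonneg _
  have habs : |b i - a i| ≤ Real.sqrt S := abs_le_sqrt_sqnorm (fun i => b i - a i) i
  rcases eq_or_lt_of_le (Real.sqrt_nonneg S) with h0 | h0
  · rw [← h0] at habs
    exact le_trans habs (div_nonneg hR0 hγ.le)
  · have hSq : γ * (Real.sqrt S * Real.sqrt S) ≤ Real.sqrt S * ∑ j, lam1 s j * |p j - q j| := by
      rw [Real.mul_self_sqrt hSnn]; linarith
    have hfin : γ * Real.sqrt S ≤ ∑ j, lam1 s j * |p j - q j| := by nlinarith
    refine le_trans habs ?_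
    rw [le_div_iff₀ hγ]; linarith

lemma ell_growth {ℓ : State d N → Vec d → ℝ} {γ : ℝ}
    (hγ : 0 < γ) (hconv : StronglyConvex ℓ γ)
    (hℓnn : ∀ s a, (∀ i, 0 ≤ a i) → 0 ≤ ℓ s a)
    {s : State d N} {a : Vec d} (ha : ∀ i, 0 ≤ a i) :
    (γ/2) * sqnorm a ≤ ℓ s a + ℓ s 0 := by
  have h0 : ∀ i, (0:ℝ) ≤ (0 : Vec d) i := fun i => le_rfl
  have h1 := hconv s 0 a h0 ha (1/2) ⟨by norm_num, by norm_num⟩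
  have hmid : 0 ≤ ℓ s (fun i => (1/2 : ℝ) * a i + (1 - 1/2 : ℝ) * (0 : Vec d) i) :=
    hℓnn s _ fun i => by have := ha i; norm_num; linarith
  have hsq : sqnorm (fun i => a i - (0 : Vec d) i) = sqnorm a :=
    Finset.sum_congr rfl fun i _ => by simp
  rw [hsq] at h1
  nlinarith [h1, hmid]

end Aux

section Aux2

variable {d N : ℕ}

lemma quad_min {γ : ℝ} (hγ : 0 < γ) (c x : ℝ) : -(c^2/(2*γ)) ≤ (γ/2)*x^2 - c*x := by
  have h : 0 ≤ (γ/2)*x^2 - c*x + c^2/(2*γ) := by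
    have e : (γ/2)*x^2 - c*x + c^2/(2*γ) = (γ*x - c)^2 / (2*γ) := by
      field_simp; ring
    rw [e]; positivity
  linarith

lemma sum_quad_min {γ : ℝ} (hγ : 0 < γ) (c : ℝ) {k : ℕ} (s : Finset (Fin k)) (a : Fin k → ℝ) :
    -((s.card : ℝ) * (c^2/(2*γ))) ≤ ∑ j ∈ s, ((γ/2)*(a j)^2 - c*(a j)) := by
  have h1 : ∑ j ∈ s, (-(c^2/(2*γ))) ≤ ∑ j ∈ s, ((γ/2)*(a j)^2 - c*(a j)) :=
    Finset.sum_le_sum fun j _ => quad_min hγ c (a j)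
  calc -((s.card : ℝ) * (c^2/(2*γ))) = ∑ _j ∈ s, (-(c^2/(2*γ))) := by
        rw [Finset.sum_const, nsmul_eq_mul]; ring
    _ ≤ _ := h1

lemma argmin_bound {lam1 : State d N → Vec d} {ℓ : State d N → Vec d → ℝ} {γ : ℝ}
    (hγ : 0 < γ) (hconv : StronglyConvex ℓ γ)
    (hℓnn : ∀ s a, (∀ i, 0 ≤ a i) → 0 ≤ ℓ s a)
    {s : State d N} (hl1 : ∀ i, 0 ≤ lam1 s i) {p a : Vec d}
    (ha : IsArgmin lam1 ℓ s p a)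
    {P Λ L0 : ℝ} (hP : ∀ i, |p i| ≤ P) (hΛ : ∀ i, lam1 s i ≤ Λ) (hL0 : ℓ s 0 ≤ L0)
    (hPn : 0 ≤ P) (hΛn : 0 ≤ Λ) (hL0n : 0 ≤ L0) (i : Fin (d-1)) :
    a i ≤ (γ + 2*(2*L0 + (d:ℝ)*((P*Λ)^2/(2*γ))) + 2*(P*Λ))/γ := by
  set c : ℝ := P*Λ with hc
  have hcn : 0 ≤ c := mul_nonneg hPn hΛn
  set R : ℝ := 2*L0 + (d:ℝ)*(c^2/(2*γ)) with hR
  clear_value R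
  have hR0 : 0 ≤ R := by
    have : 0 ≤ (d:ℝ)*(c^2/(2*γ)) := by positivity
    simp only [hR]; linarith
  have hF0 : ℓ s a + ∑ j, lam1 s j * a j * p j ≤ ℓ s 0 := by
    have h := ha.2 0 (fun _ => le_rfl)
    simpa using h
  have hg := ell_growth hγ hconv hℓnn ha.1 (s := s)
  have hlin : -(∑ j, c * a j) ≤ ∑ j, lam1 s j * a j * p j := by
    rw [← Finset.sum_neg_distrib]
    apply Finset.sum_le_sum; intro j _
    have h1 : |lam1 s j * a j * p j| ≤ c * a j := by
      rw [abs_mul, abs_mul, abs_of_nonneg (hl1 j), abs_of_nonneg (ha.1 j)]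
      calc lam1 s j * a j * |p j| ≤ Λ * a j * P :=
            mul_le_mul (mul_le_mul_of_nonneg_right (hΛ j) (ha.1 j)) (hP j)
              (abs_nonneg _) (mul_nonneg hΛn (ha.1 j))
        _ = c * a j := by rw [hc]; ring
    linarith [neg_abs_le (lam1 s j * a j * p j)]
  have hkey : ∑ j, ((γ/2)*(a j)^2 - c*(a j)) ≤ 2*L0 := by
    have e1 : (γ/2) * sqnorm a = ∑ j, (γ/2)*(a j)^2 := by
      rw [sqnorm, Finset.mul_sum]
    have e2 : ∑ j, ((γ/2)*(a j)^2 - c*(a j))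
        = (∑ j, (γ/2)*(a j)^2) - ∑ j, c*(a j) := Finset.sum_sub_distrib _ _
    rw [e2, ← e1]
    linarith
  -- isolate term i
  have hins : ((γ/2)*(a i)^2 - c*(a i)) + ∑ j ∈ Finset.univ.erase i, ((γ/2)*(a j)^2 - c*(a j))
      = ∑ j, ((γ/2)*(a j)^2 - c*(a j)) :=
    Finset.add_sum_erase Finset.univ (fun j => (γ/2)*(a j)^2 - c*(a j)) (Finset.mem_univ i)
  have hrest := sum_quad_min hγ c (Finset.univ.erase i) a
  have hcard : ((Finset.univ.erase i).card : ℝ) ≤ (d:ℝ) := by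
    have h1 : (Finset.univ.erase i).card ≤ d :=
      le_trans (Finset.card_erase_le)
        (by rw [Finset.card_univ, Fintype.card_fin]; exact Nat.sub_le d 1)
    exact_mod_cast h1
  have hfi : (γ/2)*(a i)^2 - c*(a i) ≤ R := by
    have h2 : 0 ≤ c^2/(2*γ) := by positivity
    have h3 : ((Finset.univ.erase i).card : ℝ) * (c^2/(2*γ)) ≤ (d:ℝ) * (c^2/(2*γ)) :=
      mul_le_mul_of_nonneg_right hcard h2
    simp only [hR]; linarith
  -- conclude
  have hgoal : a i * γ ≤ γ + 2*R + 2*c := by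
    by_cases hcase : a i ≤ 1
    · nlinarith
    · push_neg at hcase
      have ha1 : (1:ℝ) ≤ a i := hcase.le
      have h1 : γ * (a i)^2 ≤ 2*R + 2*c*(a i) := by linarith
      have h2 : (γ * a i) * a i ≤ (2*R + 2*c) * a i := by nlinarith
      have h3 : γ * a i ≤ 2*R + 2*c :=
        le_of_mul_le_mul_right h2 (by linarith)
      linarith
  rw [le_div_iff₀ hγ]
  simp only [hR, hc] at hgoal ⊢
  linarith

lemma ham_bound {lam0 lam1 : State d N → Vec d} {ℓ : State d N → Vec d → ℝ} {γ : ℝ}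
    (hγ : 0 < γ) (hconv : StronglyConvex ℓ γ)
    (hℓnn : ∀ s a, (∀ i, 0 ≤ a i) → 0 ≤ ℓ s a)
    {s : State d N} (hl0 : ∀ i, 0 ≤ lam0 s i) (hl1 : ∀ i, 0 ≤ lam1 s i)
    {p : Vec d} {P Λ L0 Λ0 : ℝ}
    (hP : ∀ i, |p i| ≤ P) (hΛ : ∀ i, lam1 s i ≤ Λ) (hΛ0 : ∑ i, lam0 s i ≤ Λ0)
    (hL0 : ℓ s 0 ≤ L0) (hPn : 0 ≤ P) (hΛn : 0 ≤ Λ) (hL0n : 0 ≤ L0) :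
    |ham lam0 lam1 ℓ s p| ≤ L0 + P*Λ0 + (d:ℝ)*((P*Λ)^2/(2*γ)) := by
  set c : ℝ := P*Λ with hc
  have hcn : 0 ≤ c := mul_nonneg hPn hΛn
  have hΛ0n : 0 ≤ Λ0 := le_trans (Finset.sum_nonneg fun j _ => hl0 j) hΛ0
  set lb : ℝ := -(L0 + P*Λ0 + (d:ℝ)*(c^2/(2*γ))) with hlbdef
  have hlam0p : -(P*Λ0) ≤ ∑ j, lam0 s j * p j ∧ ∑ j, lam0 s j * p j ≤ P*Λ0 := by
    constructor
    · have h1 : ∑ j, (-(lam0 s j * P)) ≤ ∑ j, lam0 s j * p j := by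
        apply Finset.sum_le_sum; intro j _
        have := hP j; have := hl0 j
        nlinarith [neg_abs_le (p j), abs_nonneg (p j)]
      have h2 : ∑ j, (-(lam0 s j * P)) = -(P * ∑ j, lam0 s j) := by
        rw [Finset.mul_sum, ← Finset.sum_neg_distrib]
        exact Finset.sum_congr rfl fun j _ => by ring
      rw [h2] at h1
      have h3 : P * ∑ j, lam0 s j ≤ P * Λ0 := mul_le_mul_of_nonneg_left hΛ0 hPn
      linarith
    · have h1 : ∑ j, lam0 s j * p j ≤ ∑ j, lam0 s j * P := by
        apply Finset.sum_le_sum; intro j _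
        have := hP j; have := hl0 j
        nlinarith [le_abs_self (p j)]
      have h2 : ∑ j, lam0 s j * P = P * ∑ j, lam0 s j := by
        rw [Finset.mul_sum]; exact Finset.sum_congr rfl fun j _ => by ring
      rw [h2] at h1
      have h3 : P * ∑ j, lam0 s j ≤ P * Λ0 := mul_le_mul_of_nonneg_left hΛ0 hPn
      linarith
  have hlb : ∀ y ∈ ((fun a => ℓ s a + ∑ i, (lam0 s i + lam1 s i * a i) * p i) ''
      {a : Vec d | ∀ i, 0 ≤ a i}), lb ≤ y := by
    rintro y ⟨a, haS, rfl⟩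
    simp only [Set.mem_setOf_eq] at haS
    have hsplit : ∑ i, (lam0 s i + lam1 s i * a i) * p i
        = (∑ i, lam0 s i * p i) + ∑ i, lam1 s i * a i * p i := by
      rw [← Finset.sum_add_distrib]
      exact Finset.sum_congr rfl fun i _ => by ring
    have hlin : -(∑ j, c * a j) ≤ ∑ j, lam1 s j * a j * p j := by
      rw [← Finset.sum_neg_distrib]
      apply Finset.sum_le_sum; intro j _
      have h1 : |lam1 s j * a j * p j| ≤ c * a j := by
        rw [abs_mul, abs_mul, abs_of_nonneg (hl1 j), abs_of_nonneg (haS j)]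
        calc lam1 s j * a j * |p j| ≤ Λ * a j * P :=
              mul_le_mul (mul_le_mul_of_nonneg_right (hΛ j) (haS j)) (hP j)
                (abs_nonneg _) (mul_nonneg hΛn (haS j))
          _ = c * a j := by rw [hc]; ring
      linarith [neg_abs_le (lam1 s j * a j * p j)]
    have hg := ell_growth hγ hconv hℓnn haS (s := s)
    have e1 : (γ/2) * sqnorm a = ∑ j, (γ/2)*(a j)^2 := by
      rw [sqnorm, Finset.mul_sum]
    have hq := sum_quad_min hγ c (Finset.univ : Finset (Fin (d-1))) a
    have e2 : ∑ j, ((γ/2)*(a j)^2 - c*(a j))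
        = (∑ j, (γ/2)*(a j)^2) - ∑ j, c*(a j) := Finset.sum_sub_distrib _ _
    rw [e2] at hq
    have hcard : ((Finset.univ : Finset (Fin (d-1))).card : ℝ) ≤ (d:ℝ) := by
      have h1 : (Finset.univ : Finset (Fin (d-1))).card ≤ d := by
        rw [Finset.card_univ, Fintype.card_fin]; exact Nat.sub_le d 1
      exact_mod_cast h1
    have h2 : 0 ≤ c^2/(2*γ) := by positivity
    have h3 : ((Finset.univ : Finset (Fin (d-1))).card : ℝ) * (c^2/(2*γ))
        ≤ (d:ℝ) * (c^2/(2*γ)) := mul_le_mul_of_nonneg_right hcard h2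
    show lb ≤ ℓ s a + ∑ i, (lam0 s i + lam1 s i * a i) * p i
    rw [hsplit]
    simp only [hlbdef]
    linarith [hlam0p.1]
  have hne : (fun a => ℓ s a + ∑ i, (lam0 s i + lam1 s i * a i) * p i) 0 ∈
      ((fun a => ℓ s a + ∑ i, (lam0 s i + lam1 s i * a i) * p i) ''
      {a : Vec d | ∀ i, 0 ≤ a i}) :=
    Set.mem_image_of_mem _ (fun i => le_rfl)
  have hupper : ham lam0 lam1 ℓ s p ≤ ℓ s 0 + ∑ i, lam0 s i * p i := by
    have h := csInf_le ⟨lb, hlb⟩ hne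
    simp at h; exact h
  have hlower : lb ≤ ham lam0 lam1 ℓ s p := le_csInf ⟨_, hne⟩ hlb
  have hdc : 0 ≤ (d:ℝ)*(c^2/(2*γ)) := by positivity
  rw [abs_le]
  constructor
  · simp only [hlbdef] at hlower; rw [ham] at hlower ⊢; linarith
  · rw [ham] at hupper ⊢; linarith [hlam0p.2]

end Aux2

set_option maxHeartbeats 3200000 in
theorem stmt2_MPE_exists_unique
    {d N : ℕ} (hd : 2 ≤ d) (hN : 1 ≤ N) (T : ℝ) (hT : 0 < T)
    (lam0 lam1 : State d N → Vec d)
    (hlam0 : ∀ s i, 0 ≤ lam0 s i) (hlam1 : ∀ s i, 0 ≤ lam1 s i)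
    (ℓ : State d N → Vec d → ℝ) (γ : ℝ) (hγ : 0 < γ)
    (hℓc : ∀ s, Continuous (ℓ s))
    (hℓnn : ∀ s a, (∀ i, 0 ≤ a i) → 0 ≤ ℓ s a)
    (hℓconv : StronglyConvex ℓ γ)
    (g : State d N → ℝ) (hg : ∀ s, 0 ≤ g s)

    (v : ℝ → State d N → ℝ) (hv : IsNLLSol T lam0 lam1 ℓ g v)
    (hvuniq : ∀ w, IsNLLSol T lam0 lam1 ℓ g w → ∀ t ∈ Set.Icc (0:ℝ) T, ∀ s, w t s = v t s)
    (α : Ctrl d N) (hα : IsBR T lam1 ℓ v α) :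
    Admissible T α ∧ IsMPE T lam0 lam1 ℓ g α ∧
    ∀ α' : Ctrl d N, IsMPE T lam0 lam1 ℓ g α' →
      ∀ t ∈ Set.Icc (0:ℝ) T, ∀ s, α' t s = α t s := by
  classical
  obtain ⟨hterm, α₀, hbr₀, hhjb₀⟩ := hv
  have hagree : ∀ t ∈ Set.Icc (0:ℝ) T, ∀ s : State d N, α t s = α₀ t s :=
    fun t ht s => argmin_unique hγ hℓconv (hα t ht s) (hbr₀ t ht s)
  -- continuity and boundedness of v
  have hcont : ∀ s : State d N, ContinuousOn (fun t => v t s) (Set.Icc (0:ℝ) T) :=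
    fun s t ht => (hhjb₀ t ht s).continuousWithinAt
  obtain ⟨B, hB⟩ : ∃ B : ℝ, ∀ t ∈ Set.Icc (0:ℝ) T, ∀ s : State d N, |v t s| ≤ B := by
    obtain ⟨C, hC⟩ := isCompact_Icc.exists_bound_of_continuousOn
      (continuousOn_finset_sum (Finset.univ : Finset (State d N)) (fun s _ => (hcont s).abs))
    refine ⟨C, fun t ht s => ?_⟩
    have h1 : |v t s| ≤ ∑ s' : State d N, |v t s'| :=
      Finset.single_le_sum (f := fun s' : State d N => |v t s'|)
        (fun s' _ => abs_nonneg _) (Finset.mem_univ s)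
    exact h1.trans ((le_abs_self _).trans (hC t ht))
  have h0T : (0:ℝ) ∈ Set.Icc (0:ℝ) T := ⟨le_rfl, hT.le⟩
  have hSne : Nonempty (State d N) := by
    have hd0 : 0 < d := by omega
    refine ⟨⟨0, hd0⟩, ⟨fun x => if x = ⟨0, hd0⟩ then ⟨N, Nat.lt_succ_self N⟩
      else ⟨0, Nat.succ_pos N⟩, ?_⟩⟩
    have hv : ∀ x : Fin d,
        (((if x = (⟨0, hd0⟩ : Fin d) then (⟨N, Nat.lt_succ_self N⟩ : Fin (N+1))
          else ⟨0, Nat.succ_pos N⟩) : Fin (N+1)) : ℕ) = if x = ⟨0, hd0⟩ then N else 0 :=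
      fun x => by split <;> rfl
    simp only [hv]
    simp
  have hB0 : 0 ≤ B := le_trans (abs_nonneg _) (hB 0 h0T hSne.some)
  -- bound on the gradient vector
  have hPn : 0 ≤ 2*B := by linarith
  have hPb : ∀ t ∈ Set.Icc (0:ℝ) T, ∀ s : State d N, ∀ i,
      |delta s.1 (fun y => v t (y, s.2)) i| ≤ 2*B := by
    intro t ht s i
    have h1 := hB t ht (idxToState s.1 i, s.2)
    have h2 := hB t ht (s.1, s.2)
    have h3 : delta s.1 (fun y => v t (y, s.2)) i
        = v t (idxToState s.1 i, s.2) - v t (s.1, s.2) := rfl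
    rw [h3]
    calc |v t (idxToState s.1 i, s.2) - v t (s.1, s.2)|
        ≤ |v t (idxToState s.1 i, s.2)| + |v t (s.1, s.2)| := abs_sub _ _
      _ ≤ 2*B := by linarith
  -- global constants
  set Λ : ℝ := ∑ s : State d N, ∑ i, lam1 s i with hΛdef
  have hΛn : 0 ≤ Λ := Finset.sum_nonneg fun s _ => Finset.sum_nonneg fun i _ => hlam1 s i
  have hΛsum : ∀ s : State d N, ∑ i, lam1 s i ≤ Λ := fun s =>
    Finset.single_le_sum (fun s' _ => Finset.sum_nonneg fun i _ => hlam1 s' i)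
      (Finset.mem_univ s)
  have hΛe : ∀ (s : State d N) (i : Fin (d-1)), lam1 s i ≤ Λ := fun s i =>
    le_trans (Finset.single_le_sum (fun j _ => hlam1 s j) (Finset.mem_univ i)) (hΛsum s)
  set Λ0 : ℝ := ∑ s : State d N, ∑ i, lam0 s i with hΛ0def
  have hΛ0n : 0 ≤ Λ0 := Finset.sum_nonneg fun s _ => Finset.sum_nonneg fun i _ => hlam0 s i
  have hΛ0sum : ∀ s : State d N, ∑ i, lam0 s i ≤ Λ0 := fun s =>
    Finset.single_le_sum (fun s' _ => Finset.sum_nonneg fun i _ => hlam0 s' i)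
      (Finset.mem_univ s)
  have hΛ0e : ∀ (s : State d N) (i : Fin (d-1)), lam0 s i ≤ Λ0 := fun s i =>
    le_trans (Finset.single_le_sum (fun j _ => hlam0 s j) (Finset.mem_univ i)) (hΛ0sum s)
  set L0 : ℝ := ∑ s : State d N, ℓ s 0 with hL0def
  have hL0n : 0 ≤ L0 := Finset.sum_nonneg fun s _ => hℓnn s 0 (fun _ => le_rfl)
  have hL0e : ∀ s : State d N, ℓ s 0 ≤ L0 := fun s =>
    Finset.single_le_sum (fun s' _ => hℓnn s' 0 (fun _ => le_rfl)) (Finset.mem_univ s)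
  set A : ℝ := (γ + 2*(2*L0 + (d:ℝ)*((2*B*Λ)^2/(2*γ))) + 2*(2*B*Λ))/γ with hAdef
  have hBΛ : 0 ≤ 2*B*Λ := mul_nonneg hPn hΛn
  have hA0 : 0 ≤ A := by
    have hX : 0 ≤ (d:ℝ)*((2*B*Λ)^2/(2*γ)) := by positivity
    exact div_nonneg (by linarith) hγ.le
  have hAb : ∀ t ∈ Set.Icc (0:ℝ) T, ∀ s : State d N, ∀ i, α₀ t s i ≤ A := by
    intro t ht s i
    exact argmin_bound hγ hℓconv hℓnn (fun j => hlam1 s j) (hbr₀ t ht s)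
      (hPb t ht s) (fun j => hΛe s j) (hL0e s) hPn hΛn hL0n i
  -- bound on the Hamiltonian
  set Mham : ℝ := L0 + 2*B*Λ0 + (d:ℝ)*((2*B*Λ)^2/(2*γ)) with hMhamdef
  have hham : ∀ t ∈ Set.Icc (0:ℝ) T, ∀ s : State d N,
      |ham lam0 lam1 ℓ s (delta s.1 fun y => v t (y, s.2))| ≤ Mham := by
    intro t ht s
    have := ham_bound hγ hℓconv hℓnn (fun i => hlam0 s i) (fun i => hlam1 s i)
      (hPb t ht s) (fun i => hΛe s i) (hΛ0sum s) (hL0e s) hPn hΛn hL0n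
    calc |ham lam0 lam1 ℓ s (delta s.1 fun y => v t (y, s.2))|
        ≤ L0 + 2*B*Λ0 + (d:ℝ)*((2*B*Λ)^2/(2*γ)) := this
      _ = Mham := by rw [hMhamdef]
  -- bound on the mean-field generator
  set CG : ℝ := (N:ℝ)*((Λ0 + Λ*A)*(2*B)) with hCGdef
  have hCG0 : 0 ≤ CG :=
    mul_nonneg (Nat.cast_nonneg N)
      (mul_nonneg (by linarith [mul_nonneg hΛn hA0, hΛ0n]) hPn)
  set Mg : ℝ := (d:ℝ)*((d:ℝ)*CG) with hMgdef
  have hMg0 : 0 ≤ Mg := by positivity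
  have hgen : ∀ t ∈ Set.Icc (0:ℝ) T, ∀ s : State d N,
      |genMu lam0 lam1 α₀ v t s| ≤ Mg := by
    intro t ht s
    rw [genMu]
    have hpt : ∀ (z : Fin d) (i : Fin (d-1)),
        |((s.2.1 z : ℕ) : ℝ) *
          ((lam0 (z, shift s.2 s.1 z) i + lam1 (z, shift s.2 s.1 z) i *
              α₀ t (z, shift s.2 s.1 z) i) *
            (v t (s.1, shift s.2 (idxToState z i) z) - v t s))| ≤ CG := by
      intro z i
      have hn0 : (0:ℝ) ≤ ((s.2.1 z : ℕ) : ℝ) := Nat.cast_nonneg _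
      have hnN : ((s.2.1 z : ℕ) : ℝ) ≤ (N:ℝ) := Nat.cast_le.mpr (Fin.is_le _)
      have hr0 : 0 ≤ lam0 (z, shift s.2 s.1 z) i + lam1 (z, shift s.2 s.1 z) i *
          α₀ t (z, shift s.2 s.1 z) i :=
        add_nonneg (hlam0 _ i) (mul_nonneg (hlam1 _ i) ((hbr₀ t ht _).1 i))
      have hrU : lam0 (z, shift s.2 s.1 z) i + lam1 (z, shift s.2 s.1 z) i *
          α₀ t (z, shift s.2 s.1 z) i ≤ Λ0 + Λ*A := by
        have h1 := hΛ0e (z, shift s.2 s.1 z) i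
        have h2 : lam1 (z, shift s.2 s.1 z) i * α₀ t (z, shift s.2 s.1 z) i ≤ Λ*A :=
          mul_le_mul (hΛe _ i) (hAb t ht _ i) ((hbr₀ t ht _).1 i) hΛn
        linarith
      have hdiff : |v t (s.1, shift s.2 (idxToState z i) z) - v t s| ≤ 2*B := by
        have h1 := hB t ht (s.1, shift s.2 (idxToState z i) z)
        have h2 := hB t ht s
        calc |v t (s.1, shift s.2 (idxToState z i) z) - v t s|
            ≤ |v t (s.1, shift s.2 (idxToState z i) z)| + |v t s| := abs_sub _ _
          _ ≤ 2*B := by linarith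
      rw [abs_mul, abs_mul, abs_of_nonneg hn0, abs_of_nonneg hr0, hCGdef]
      exact mul_le_mul hnN
        (mul_le_mul hrU hdiff (abs_nonneg _) (by linarith [mul_nonneg hΛn hA0, hΛ0n]))
        (mul_nonneg hr0 (abs_nonneg _)) (Nat.cast_nonneg N)
    calc |∑ z : Fin d, ∑ i : Fin (d-1),
          ((s.2.1 z : ℕ) : ℝ) *
            ((lam0 (z, shift s.2 s.1 z) i + lam1 (z, shift s.2 s.1 z) i *
                α₀ t (z, shift s.2 s.1 z) i) *
              (v t (s.1, shift s.2 (idxToState z i) z) - v t s))|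
        ≤ ∑ z : Fin d, ∑ i : Fin (d-1),
          |((s.2.1 z : ℕ) : ℝ) *
            ((lam0 (z, shift s.2 s.1 z) i + lam1 (z, shift s.2 s.1 z) i *
                α₀ t (z, shift s.2 s.1 z) i) *
              (v t (s.1, shift s.2 (idxToState z i) z) - v t s))| :=
          le_trans (Finset.abs_sum_le_sum_abs _ _)
            (Finset.sum_le_sum fun z _ => Finset.abs_sum_le_sum_abs _ _)
      _ ≤ ∑ _z : Fin d, ∑ _i : Fin (d-1), CG :=
          Finset.sum_le_sum fun z _ => Finset.sum_le_sum fun i _ => hpt z i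
      _ ≤ Mg := by
          rw [Finset.sum_const, Finset.sum_const, Finset.card_univ, Finset.card_univ,
            Fintype.card_fin, Fintype.card_fin, nsmul_eq_mul, nsmul_eq_mul, hMgdef]
          have hdd : ((d-1:ℕ):ℝ) ≤ (d:ℝ) := Nat.cast_le.mpr (Nat.sub_le d 1)
          exact mul_le_mul_of_nonneg_left (mul_le_mul_of_nonneg_right hdd hCG0)
            (Nat.cast_nonneg d)
  -- Lipschitz bound on v
  have hMham0 : 0 ≤ Mham := le_trans (abs_nonneg _) (hham 0 h0T hSne.some)
  set M : ℝ := Mham + Mg with hMdef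
  have hM0 : 0 ≤ M := by linarith
  have hlipv : ∀ s : State d N, ∀ t ∈ Set.Icc (0:ℝ) T, ∀ t' ∈ Set.Icc (0:ℝ) T,
      |v t s - v t' s| ≤ M * |t - t'| := by
    intro s t ht t' ht'
    have key := Convex.norm_image_sub_le_of_norm_hasDerivWithin_le
      (f := fun u => v u s)
      (f' := fun u => -(ham lam0 lam1 ℓ s (delta s.1 fun y => v u (y, s.2)) +
        genMu lam0 lam1 α₀ v u s))
      (s := Set.Icc (0:ℝ) T) (C := M)
      (fun u hu => hhjb₀ u hu s)
      (fun u hu => by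
        rw [Real.norm_eq_abs, abs_neg]
        calc |ham lam0 lam1 ℓ s (delta s.1 fun y => v u (y, s.2)) +
              genMu lam0 lam1 α₀ v u s|
            ≤ |ham lam0 lam1 ℓ s (delta s.1 fun y => v u (y, s.2))| +
              |genMu lam0 lam1 α₀ v u s| := abs_add_le _ _
          _ ≤ M := add_le_add (hham u hu s) (hgen u hu s))
      (convex_Icc 0 T) ht' ht
    simpa [Real.norm_eq_abs] using key
  -- admissibility of α
  have hadm : Admissible T α := by
    constructor
    · exact fun t ht s i => (hα t ht s).1 i
    · refine ⟨Real.toNNReal (2*Λ*M/γ), fun s i => ?_⟩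
      apply LipschitzOnWith.of_dist_le_mul
      intro t ht t' ht'
      rw [Real.dist_eq, Real.dist_eq]
      have hlip := argmin_lip hγ hℓconv (fun j => hlam1 s j)
        (hα t' ht' s) (hα t ht s) i
      have hdiffj : ∀ j : Fin (d-1),
          |delta s.1 (fun y => v t' (y, s.2)) j - delta s.1 (fun y => v t (y, s.2)) j|
            ≤ 2*M*|t - t'| := by
        intro j
        have e : delta s.1 (fun y => v t' (y, s.2)) j - delta s.1 (fun y => v t (y, s.2)) j
            = (v t' (idxToState s.1 j, s.2) - v t (idxToState s.1 j, s.2))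
              - (v t' (s.1, s.2) - v t (s.1, s.2)) := by
          simp only [delta]; ring
        rw [e]
        have h1 := hlipv (idxToState s.1 j, s.2) t' ht' t ht
        have h2 := hlipv (s.1, s.2) t' ht' t ht
        have h3 : |t' - t| = |t - t'| := abs_sub_comm _ _
        rw [h3] at h1 h2
        calc |(v t' (idxToState s.1 j, s.2) - v t (idxToState s.1 j, s.2))
              - (v t' (s.1, s.2) - v t (s.1, s.2))|
            ≤ |v t' (idxToState s.1 j, s.2) - v t (idxToState s.1 j, s.2)|
              + |v t' (s.1, s.2) - v t (s.1, s.2)| := abs_sub _ _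
          _ ≤ 2*M*|t - t'| := by linarith
      have hsum : ∑ j, lam1 s j *
          |delta s.1 (fun y => v t' (y, s.2)) j - delta s.1 (fun y => v t (y, s.2)) j|
            ≤ Λ * (2*M*|t - t'|) := by
        calc ∑ j, lam1 s j *
            |delta s.1 (fun y => v t' (y, s.2)) j - delta s.1 (fun y => v t (y, s.2)) j|
            ≤ ∑ j, lam1 s j * (2*M*|t - t'|) :=
              Finset.sum_le_sum fun j _ =>
                mul_le_mul_of_nonneg_left (hdiffj j) (hlam1 s j)
          _ = (∑ j, lam1 s j) * (2*M*|t - t'|) := (Finset.sum_mul _ _ _).symm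
          _ ≤ Λ * (2*M*|t - t'|) :=
              mul_le_mul_of_nonneg_right (hΛsum s) (by positivity)
      have hKnn : 0 ≤ 2*Λ*M/γ := by positivity
      rw [Real.coe_toNNReal _ hKnn]
      calc |α t s i - α t' s i|
          ≤ (∑ j, lam1 s j *
            |delta s.1 (fun y => v t' (y, s.2)) j - delta s.1 (fun y => v t (y, s.2)) j|)/γ :=
            hlip
        _ ≤ (Λ * (2*M*|t - t'|))/γ := (div_le_div_iff_of_pos_right hγ).mpr hsum
        _ = 2*Λ*M/γ * |t - t'| := by ring
  -- α is a best-response fixed point: the HJB equation for β = α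
  have hhjbα : IsHJBSol T lam0 lam1 ℓ g α v := by
    refine ⟨hterm, fun t ht s => ?_⟩
    have he : genMu lam0 lam1 α v t s = genMu lam0 lam1 α₀ v t s := by
      unfold genMu
      exact Finset.sum_congr rfl fun z _ => Finset.sum_congr rfl fun i _ => by
        rw [hagree t ht (z, shift s.2 s.1 z)]
    rw [he]
    exact hhjb₀ t ht s
  refine ⟨hadm, ⟨hadm, v, hhjbα, hα⟩, ?_⟩
  -- uniqueness
  intro α' hα' t ht s
  obtain ⟨hadm', v', hhjb', hbr'⟩ := hα'
  have hnll' : IsNLLSol T lam0 lam1 ℓ g v' := ⟨hhjb'.1, α', hbr', hhjb'.2⟩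
  have hd2 : (fun y => v' t (y, s.2)) = fun y => v t (y, s.2) :=
    funext fun y => hvuniq v' hnll' t ht (y, s.2)
  have h1 := hbr' t ht s
  rw [hd2] at h1
  exact argmin_unique hγ hℓconv h1 (hα t ht s)

end NLLGame
end
end

section
/- There exists a constant c* > 0 such that for all β, β̃ ∈ 𝒜* and all t ∈ [0,T], |v^β(t) − v^{β̃}(t)|₂² ≤ c* ∫_t^T |β̃(s) − β(s)|₂² ds. -/
open scoped BigOperators Classical

noncomputable section

namespace NLLGame

variable {d N : ℕ}

open Set Filter Topology

lemma continuousOn_finset_inf' {ι : Type*} {A : Set ℝ} (t : Finset ι) (ht : t.Nonempty)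
    {f : ℝ → ι → ℝ} (hf : ∀ s ∈ t, ContinuousOn (fun u => f u s) A) :
    ContinuousOn (fun u => t.inf' ht (f u)) A := by
  classical
  induction t using Finset.cons_induction with
  | empty => exact absurd ht (by simp)
  | cons a s ha ih =>
      rcases s.eq_empty_or_nonempty with rfl | hs
      · simpa using hf a (by simp)
      · have hrw : (fun u => (Finset.cons a s ha).inf' ht (f u)) =
            fun u => min (f u a) (s.inf' hs (f u)) := by
          funext u; exact Finset.inf'_cons hs (f u)
        rw [hrw]
        exact fun x hx => ((hf a (by simp)) x hx).min
          ((ih hs (fun b hb => hf b (by simp [hb]))) x hx)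

lemma min_principle {ι : Type*} [Fintype ι] [Nonempty ι] {t0 T : ℝ}
    (f D : ℝ → ι → ℝ)
    (hderiv : ∀ t ∈ Icc t0 T, ∀ s, HasDerivWithinAt (fun u => f u s) (D t s) (Icc t0 T) t)
    (hD : ∀ t ∈ Icc t0 T, ∀ s, (∀ s', f t s ≤ f t s') → D t s ≤ 0)
    {b : ℝ} (hb : ∀ s, b ≤ f T s) :
    ∀ t ∈ Icc t0 T, ∀ s, b ≤ f t s := by
  have hne : (Finset.univ : Finset ι).Nonempty := Finset.univ_nonempty
  set m : ℝ → ℝ := fun u => Finset.univ.inf' hne (f u) with hm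
  have hcont : ∀ s, ContinuousOn (fun u => f u s) (Icc t0 T) :=
    fun s u hu => (hderiv u hu s).continuousWithinAt
  have hmcont : ContinuousOn m (Icc t0 T) :=
    continuousOn_finset_inf' _ hne (fun s _ => hcont s)
  have hmT : b ≤ m T := Finset.le_inf' hne _ (fun s _ => hb s)
  have key : ∀ ε > 0, ∀ u ∈ Icc t0 T, b - ε * (T - u) ≤ m u := by
    intro ε hε
    by_contra hcon
    push_neg at hcon
    obtain ⟨t1, ht1, hlt⟩ := hcon
    have ht0T : t0 ≤ T := le_trans ht1.1 ht1.2
    set ψ : ℝ → ℝ := fun u => (m u - b) + ε * (T - u) with hψ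
    have hψt1 : ψ t1 < 0 := by simp only [hψ]; linarith
    set S : Set ℝ := Icc t1 T ∩ ψ ⁻¹' (Iic (ψ t1)) with hS
    have hSne : t1 ∈ S := ⟨⟨le_refl _, ht1.2⟩, by simp⟩
    have hSbdd : BddAbove S := ⟨T, fun u hu => hu.1.2⟩
    have hψcont : ContinuousOn ψ (Icc t1 T) := by
      apply ContinuousOn.add
      · exact (hmcont.mono (Icc_subset_Icc ht1.1 le_rfl)).sub continuousOn_const
      · exact continuousOn_const.mul (continuousOn_const.sub continuousOn_id)
    have hSclosed : IsClosed S :=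
      hψcont.preimage_isClosed_of_isClosed isClosed_Icc isClosed_Iic
    set c := sSup S with hc
    have hcS : c ∈ S := hSclosed.csSup_mem ⟨t1, hSne⟩ hSbdd
    have hcT : c ∈ Icc t0 T := ⟨le_trans ht1.1 hcS.1.1, hcS.1.2⟩
    have hψc : ψ c ≤ ψ t1 := hcS.2
    have hcltT : c < T := by
      rcases lt_or_eq_of_le hcS.1.2 with h | h
      · exact h
      · exfalso
        have hTz : (0:ℝ) ≤ ψ T := by simp only [hψ]; simp; linarith
        rw [h] at hψc; linarith
    obtain ⟨s0, -, hs0⟩ := Finset.exists_min_image Finset.univ (f c) hne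
    have hmc : m c = f c s0 := le_antisymm (Finset.inf'_le _ (Finset.mem_univ s0))
      (Finset.le_inf' _ _ fun s' _ => hs0 s' (Finset.mem_univ s'))
    have hD0 : D c s0 ≤ 0 := hD c hcT s0 (fun s' => hs0 s' (Finset.mem_univ s'))
    have hslope := hasDerivWithinAt_iff_tendsto_slope.mp (hderiv c hcT s0)
    have hev1 : ∀ᶠ u in 𝓝[Icc t0 T \ {c}] c, slope (fun u => f u s0) c u < ε :=
      hslope.eventually_lt_const (lt_of_le_of_lt hD0 hε)
    have hsub : Ioc c T ⊆ Icc t0 T \ {c} := fun u hu =>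
      ⟨⟨le_trans hcT.1 hu.1.le, hu.2⟩, ne_of_gt hu.1⟩
    have hle : 𝓝[Ioc c T] c ≤ 𝓝[Icc t0 T \ {c}] c := nhdsWithin_mono _ hsub
    have hNB : (𝓝[Ioc c T] c).NeBot := by
      apply mem_closure_iff_nhdsWithin_neBot.mp
      rw [closure_Ioc hcltT.ne]
      exact ⟨le_rfl, hcltT.le⟩
    obtain ⟨u, huslope, huIoc⟩ := ((hev1.filter_mono hle).and eventually_mem_nhdsWithin).exists
    have hu1 : c < u := huIoc.1
    have hfu : f u s0 - f c s0 < ε * (u - c) := by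
      rw [slope_def_field] at huslope
      have h := (div_lt_iff₀ (sub_pos.2 hu1)).mp huslope
      linarith
    have hmu : m u ≤ f u s0 := Finset.inf'_le _ (Finset.mem_univ s0)
    have huS : u ∈ S := by
      refine ⟨⟨le_trans hcS.1.1 hu1.le, huIoc.2⟩, ?_⟩
      have : ψ u < ψ c := by simp only [hψ]; rw [hmc] at *; nlinarith
      simp only [mem_preimage, mem_Iic]
      linarith
    have : u ≤ c := le_csSup hSbdd huS
    linarith
  intro t ht s
  apply le_of_forall_pos_le_add
  intro δ hδ
  have hT' : 0 ≤ T - t := sub_nonneg.2 ht.2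
  have hε : 0 < δ / (T - t + 1) := by positivity
  have h1 := key _ hε t ht
  have h2 : m t ≤ f t s := Finset.inf'_le _ (Finset.mem_univ s)
  have h3 : δ / (T - t + 1) * (T - t) ≤ δ := by
    rw [div_mul_eq_mul_div, div_le_iff₀ (by linarith)]
    nlinarith
  linarith

lemma prod_bound {a bb c φ : ℝ} (hc : 0 ≤ c) (ha : a^2 ≤ φ) (hb : bb^2 ≤ φ) :
    |2*a| * (c * |bb - a|) ≤ c * (4*φ) := by
  have h1 : |2*a| = 2*|a| := by rw [abs_mul]; simp
  have h2 : |bb - a| ≤ |bb| + |a| := abs_sub bb a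
  have h3 : 0 ≤ |a| := abs_nonneg a
  have h4 : 0 ≤ |bb| := abs_nonneg bb
  have h5 : |a|^2 ≤ φ := by rwa [sq_abs]
  have h6 : |bb|^2 ≤ φ := by rwa [sq_abs]
  have hmain : |2*a| * |bb - a| ≤ 4*φ := by
    rw [h1]
    calc 2*|a| * |bb - a| ≤ 2*|a| * (|bb| + |a|) := by
          apply mul_le_mul_of_nonneg_left h2 (by linarith)
      _ ≤ 4*φ := by nlinarith [sq_nonneg (|a| - |bb|)]
  calc |2*a| * (c * |bb - a|) = c * (|2*a| * |bb - a|) := by ring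
    _ ≤ c * (4*φ) := mul_le_mul_of_nonneg_left hmain hc

lemma prod_bound2 {a c φ ρ : ℝ} (ha : a^2 ≤ φ) (hc : c^2 ≤ ρ) : |2*a| * |c| ≤ φ + ρ := by
  have h1 : |2*a| = 2*|a| := by rw [abs_mul]; simp
  have h5 : |a|^2 ≤ φ := by rwa [sq_abs]
  have h6 : |c|^2 ≤ ρ := by rwa [sq_abs]
  rw [h1]
  nlinarith [sq_nonneg (|a| - |c|), abs_nonneg a, abs_nonneg c]


open Set Filter Topology in
lemma ell_lb {d N : ℕ} {ℓ : State d N → Vec d → ℝ} {γ : ℝ}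
    (hℓnn : ∀ s a, (∀ i, 0 ≤ a i) → 0 ≤ ℓ s a)
    (hℓconv : StronglyConvex ℓ γ) (s : State d N) (a : Vec d) (ha : ∀ i, 0 ≤ a i) :
    γ/2 * (∑ i, (a i)^2) - ℓ s 0 ≤ ℓ s a := by
  have h := hℓconv s 0 a (fun i => le_rfl) ha (1/2) (by norm_num)
  have hmid : 0 ≤ ℓ s (fun i => (1/2 : ℝ) * a i + (1 - 1/2) * (0:Vec d) i) := by
    apply hℓnn
    intro i
    have := ha i
    simp only [Pi.zero_apply]
    nlinarith
  have hsq : sqnorm (fun i => a i - (0:Vec d) i) = ∑ i, (a i)^2 := by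
    simp [sqnorm]
  rw [hsq] at h
  nlinarith

open Set Filter Topology in
lemma ham_bddBelow {d N : ℕ} (lam0 lam1 : State d N → Vec d)
    {ℓ : State d N → Vec d → ℝ} {γ : ℝ} (hγ : 0 < γ)
    (hℓnn : ∀ s a, (∀ i, 0 ≤ a i) → 0 ≤ ℓ s a)
    (hℓconv : StronglyConvex ℓ γ) (s : State d N) (p : Vec d) :
    BddBelow ((fun a => ℓ s a + ∑ i, (lam0 s i + lam1 s i * a i) * p i) ''
      {a : Vec d | ∀ i, 0 ≤ a i}) := by
  refine ⟨∑ i, (lam0 s i * p i - (lam1 s i * p i)^2/(2*γ)) - ℓ s 0, ?_⟩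
  rintro x ⟨a, ha, rfl⟩
  have hco := ell_lb hℓnn hℓconv s a ha
  have hterm : ∀ i ∈ Finset.univ, lam0 s i * p i - (lam1 s i * p i)^2/(2*γ) - γ/2 * (a i)^2
      ≤ (lam0 s i + lam1 s i * a i) * p i := by
    intro i _
    have h2γ : (0:ℝ) < 2*γ := by linarith
    have hkey : -((lam1 s i * p i)^2) / (2*γ) ≤ γ/2 * (a i)^2 + lam1 s i * p i * a i := by
      rw [div_le_iff₀ h2γ]
      nlinarith [sq_nonneg (γ * a i + lam1 s i * p i)]
    have : -((lam1 s i * p i)^2) / (2*γ) = -((lam1 s i * p i)^2 / (2*γ)) := by ring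
    rw [this] at hkey
    nlinarith
  have hsum := Finset.sum_le_sum hterm
  have hL : ∑ i, (lam0 s i * p i - (lam1 s i * p i)^2/(2*γ) - γ/2 * (a i)^2)
      = ∑ i, (lam0 s i * p i - (lam1 s i * p i)^2/(2*γ)) - γ/2 * ∑ i, (a i)^2 := by
    rw [Finset.sum_sub_distrib, Finset.mul_sum]
  rw [hL] at hsum
  simp only
  linarith

open Set Filter Topology in
set_option maxHeartbeats 1000000 in
lemma ham_lipschitz {d N : ℕ} (lam0 lam1 : State d N → Vec d)
    (hlam0 : ∀ s i, 0 ≤ lam0 s i) (hlam1 : ∀ s i, 0 ≤ lam1 s i)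
    {ℓ : State d N → Vec d → ℝ} {γ : ℝ} (hγ : 0 < γ)
    (hℓnn : ∀ s a, (∀ i, 0 ≤ a i) → 0 ≤ ℓ s a)
    (hℓconv : StronglyConvex ℓ γ)
    (P : ℝ) (hP : 0 ≤ P) :
    ∃ C, 0 ≤ C ∧ ∀ s p q, (∀ i, |p i| ≤ P) → (∀ i, |q i| ≤ P) →
      ham lam0 lam1 ℓ s p - ham lam0 lam1 ℓ s q ≤ C * ∑ i, |p i - q i| := by
  classical
  obtain ⟨Λ1, hΛ1⟩ : ∃ x : ℝ, x = ∑ s' : State d N, ∑ i, lam1 s' i := ⟨_, rfl⟩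
  obtain ⟨L0, hL0def⟩ : ∃ x : ℝ, x = ∑ s' : State d N, ℓ s' 0 := ⟨_, rfl⟩
  obtain ⟨Λ0, hΛ0⟩ : ∃ x : ℝ, x = ∑ s' : State d N, ∑ i, lam0 s' i := ⟨_, rfl⟩
  have hΛ1nn : 0 ≤ Λ1 := hΛ1 ▸ Finset.sum_nonneg fun s' _ => Finset.sum_nonneg fun i _ => hlam1 s' i
  have hΛ0nn : 0 ≤ Λ0 := hΛ0 ▸ Finset.sum_nonneg fun s' _ => Finset.sum_nonneg fun i _ => hlam0 s' i
  have hL0nn : 0 ≤ L0 := hL0def ▸ Finset.sum_nonneg fun s' _ => hℓnn s' 0 (fun i => le_rfl)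
  have hlam1e : ∀ s' i, lam1 s' i ≤ Λ1 := by
    intro s' i
    rw [hΛ1]
    calc lam1 s' i ≤ ∑ i', lam1 s' i' :=
          Finset.single_le_sum (fun i' _ => hlam1 s' i') (Finset.mem_univ i)
      _ ≤ ∑ s'' : State d N, ∑ i', lam1 s'' i' := Finset.single_le_sum
          (fun s'' _ => Finset.sum_nonneg fun i' _ => hlam1 s'' i') (Finset.mem_univ s')
  have hlam0e : ∀ s' i, lam0 s' i ≤ Λ0 := by
    intro s' i
    rw [hΛ0]
    calc lam0 s' i ≤ ∑ i', lam0 s' i' :=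
          Finset.single_le_sum (fun i' _ => hlam0 s' i') (Finset.mem_univ i)
      _ ≤ ∑ s'' : State d N, ∑ i', lam0 s'' i' := Finset.single_le_sum
          (fun s'' _ => Finset.sum_nonneg fun i' _ => hlam0 s'' i') (Finset.mem_univ s')
  obtain ⟨Q, hQdef⟩ : ∃ x : ℝ, x = 2*L0 + 1 + (d:ℝ) * ((Λ1*P)^2/(2*γ)) := ⟨_, rfl⟩
  have hQnn : 0 ≤ Q := by
    have h1 : (0:ℝ) ≤ (d:ℝ) * ((Λ1*P)^2/(2*γ)) :=
      mul_nonneg (Nat.cast_nonneg d) (div_nonneg (sq_nonneg _) (by linarith))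
    rw [hQdef]; linarith
  obtain ⟨R, hRdef⟩ : ∃ x : ℝ, x = 1 + (2*(Λ1*P) + 2*Q)/γ := ⟨_, rfl⟩
  have hR1 : 1 ≤ R := by
    have h1 : 0 ≤ (2*(Λ1*P) + 2*Q)/γ :=
      div_nonneg (by nlinarith [mul_nonneg hΛ1nn hP]) hγ.le
    rw [hRdef]; linarith
  refine ⟨Λ0 + Λ1 * R,
    add_nonneg hΛ0nn (mul_nonneg hΛ1nn (le_trans zero_le_one hR1)), ?_⟩
  intro s p q hp hq
  apply le_of_forall_pos_le_add
  intro δ hδ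
  set ε : ℝ := min δ 1 with hεdef
  have hε0 : 0 < ε := lt_min hδ one_pos
  have hε1 : ε ≤ 1 := min_le_right _ _
  have hεδ : ε ≤ δ := min_le_left _ _
  set F : Vec d → ℝ := fun a => ℓ s a + ∑ i, (lam0 s i + lam1 s i * a i) * q i with hFdef
  set Fp : Vec d → ℝ := fun a => ℓ s a + ∑ i, (lam0 s i + lam1 s i * a i) * p i with hFpdef
  have h0mem : (0:Vec d) ∈ {a : Vec d | ∀ i, 0 ≤ a i} := fun i => le_rfl
  have hne : ((F '' {a : Vec d | ∀ i, 0 ≤ a i})).Nonempty := ⟨F 0, ⟨0, h0mem, rfl⟩⟩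
  have hbddq := ham_bddBelow lam0 lam1 hγ hℓnn hℓconv s q
  have hbddp := ham_bddBelow lam0 lam1 hγ hℓnn hℓconv s p
  have hhamq : ham lam0 lam1 ℓ s q = sInf (F '' {a : Vec d | ∀ i, 0 ≤ a i}) := rfl
  have hhamp : ham lam0 lam1 ℓ s p = sInf (Fp '' {a : Vec d | ∀ i, 0 ≤ a i}) := rfl
  have hlt : sInf (F '' {a : Vec d | ∀ i, 0 ≤ a i}) <
      ham lam0 lam1 ℓ s q + ε := by rw [hhamq]; linarith
  obtain ⟨x, ⟨a, ha, rfl⟩, hx⟩ := exists_lt_of_csInf_lt hne hlt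
  have hham_le0 : ham lam0 lam1 ℓ s q ≤ F 0 := by
    rw [hhamq]; exact csInf_le hbddq ⟨0, h0mem, rfl⟩
  have hF0 : F 0 = ℓ s 0 + ∑ i, lam0 s i * q i := by
    simp [hFdef]
  have hsplit : ∀ r : Vec d, ∑ i, (lam0 s i + lam1 s i * a i) * r i
      = ∑ i, lam0 s i * r i + ∑ i, lam1 s i * a i * r i := by
    intro r
    rw [← Finset.sum_add_distrib]
    exact Finset.sum_congr rfl fun i _ => by ring
  have hkey1 : ℓ s a + ∑ i, lam1 s i * a i * q i ≤ ℓ s 0 + ε := by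
    have hFa : F a = ℓ s a + (∑ i, lam0 s i * q i + ∑ i, lam1 s i * a i * q i) := by
      simp only [hFdef]; rw [hsplit q]
    have h1 : F a < F 0 + ε := lt_of_lt_of_le hx (by linarith)
    rw [hFa, hF0] at h1
    linarith
  have hco := ell_lb hℓnn hℓconv s a ha
  have hcross : ∀ i ∈ Finset.univ, -(Λ1 * P * a i) ≤ lam1 s i * a i * q i := by
    intro i _
    have h1 : 0 ≤ lam1 s i * a i * (q i + P) :=
      mul_nonneg (mul_nonneg (hlam1 s i) (ha i)) (by linarith [(abs_le.mp (hq i)).1])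
    have h2 : 0 ≤ (Λ1 - lam1 s i) * P * a i :=
      mul_nonneg (mul_nonneg (sub_nonneg.2 (hlam1e s i)) hP) (ha i)
    nlinarith
  have hsum1 : γ/2 * (∑ i, (a i)^2) - Λ1*P*(∑ i, a i) ≤ 2*L0 + ε := by
    have hc := Finset.sum_le_sum hcross
    rw [Finset.sum_neg_distrib] at hc
    have hl0 : ℓ s 0 ≤ L0 := hL0def ▸ Finset.single_le_sum
      (fun s' _ => hℓnn s' 0 fun i => le_rfl) (Finset.mem_univ s)
    have hmul : Λ1*P*(∑ i, a i) = ∑ i, Λ1*P*a i := by rw [Finset.mul_sum]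
    rw [hmul]
    have hneg : -(∑ i, Λ1 * P * a i) ≤ ∑ i, lam1 s i * a i * q i := by
      rw [← Finset.sum_neg_distrib] at hc ⊢
      exact hc
    linarith

  have huS : ∀ i ∈ Finset.univ, (0:ℝ) ≤ γ/2 * (a i)^2 - Λ1*P*(a i) + (Λ1*P)^2/(2*γ) := by
    intro i _
    have h2γ : (0:ℝ) < 2*γ := by linarith
    have hdiv : Λ1*P*(a i) - γ/2 * (a i)^2 ≤ (Λ1*P)^2/(2*γ) := by
      rw [le_div_iff₀ h2γ]
      nlinarith [sq_nonneg (γ * a i - Λ1*P)]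
    linarith
  have hQbound : ∀ i, γ/2 * (a i)^2 - Λ1*P*(a i) ≤ Q := by
    intro i
    have h1 : γ/2 * (a i)^2 - Λ1*P*(a i) + (Λ1*P)^2/(2*γ)
        ≤ ∑ j, (γ/2 * (a j)^2 - Λ1*P*(a j) + (Λ1*P)^2/(2*γ)) :=
      Finset.single_le_sum huS (Finset.mem_univ i)
    have h2 : ∑ j : Fin (d-1), (γ/2 * (a j)^2 - Λ1*P*(a j) + (Λ1*P)^2/(2*γ))
        = (γ/2 * (∑ j, (a j)^2) - Λ1*P*(∑ j, a j)) + ((d-1 : ℕ):ℝ) * ((Λ1*P)^2/(2*γ)) := by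
      rw [Finset.sum_add_distrib, Finset.sum_sub_distrib, Finset.mul_sum, Finset.mul_sum,
        Finset.sum_const, Finset.card_univ, Fintype.card_fin, nsmul_eq_mul]
    have h3 : ((d-1 : ℕ):ℝ) ≤ (d:ℝ) := by
      have : (d-1 : ℕ) ≤ d := Nat.sub_le d 1
      exact_mod_cast this
    have h4 : (0:ℝ) ≤ (Λ1*P)^2/(2*γ) := by positivity
    have h5 : ((d-1 : ℕ):ℝ) * ((Λ1*P)^2/(2*γ)) ≤ (d:ℝ) * ((Λ1*P)^2/(2*γ)) :=
      mul_le_mul_of_nonneg_right h3 h4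
    rw [h2] at h1
    simp only [hQdef]
    linarith
  have haR : ∀ i, a i ≤ R := by
    intro i
    by_contra hcon
    push_neg at hcon
    have ha1 : (1:ℝ) < a i := lt_of_le_of_lt hR1 hcon
    have hQa := hQbound i
    have h2 : γ * a i * a i ≤ 2*Q + 2*(Λ1*P)*a i := by nlinarith
    have h3 : γ * a i * a i ≤ (2*Q + 2*(Λ1*P)) * a i := by nlinarith [hQnn, ha1]
    have h4 : γ * a i ≤ 2*Q + 2*(Λ1*P) :=
      le_of_mul_le_mul_right (by nlinarith) (by linarith : (0:ℝ) < a i)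
    have h5 : a i ≤ (2*(Λ1*P) + 2*Q)/γ := by
      rw [le_div_iff₀ hγ]
      nlinarith
    rw [hRdef] at hcon
    linarith
  have hin : Fp a ∈ Fp '' {a' : Vec d | ∀ i, 0 ≤ a' i} := ⟨a, ha, rfl⟩
  have h1 : ham lam0 lam1 ℓ s p ≤ Fp a := by rw [hhamp]; exact csInf_le hbddp hin
  have h2 : Fp a - F a = ∑ i, (lam0 s i + lam1 s i * a i) * (p i - q i) := by
    have hc : ∀ i ∈ Finset.univ,
        (lam0 s i + lam1 s i * a i) * p i - (lam0 s i + lam1 s i * a i) * q i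
        = (lam0 s i + lam1 s i * a i) * (p i - q i) := fun i _ => by ring
    calc Fp a - F a
        = (∑ i, (lam0 s i + lam1 s i * a i) * p i)
          - ∑ i, (lam0 s i + lam1 s i * a i) * q i := by
            simp only [hFpdef, hFdef]; ring
      _ = ∑ i, ((lam0 s i + lam1 s i * a i) * p i - (lam0 s i + lam1 s i * a i) * q i) :=
          by rw [Finset.sum_sub_distrib]
      _ = ∑ i, (lam0 s i + lam1 s i * a i) * (p i - q i) := Finset.sum_congr rfl hc
  have h3 : ∑ i, (lam0 s i + lam1 s i * a i) * (p i - q i) ≤ (Λ0 + Λ1*R) * ∑ i, |p i - q i| := by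
    rw [Finset.mul_sum]
    apply Finset.sum_le_sum
    intro i _
    have hnn : 0 ≤ lam0 s i + lam1 s i * a i :=
      add_nonneg (hlam0 s i) (mul_nonneg (hlam1 s i) (ha i))
    have hup : lam0 s i + lam1 s i * a i ≤ Λ0 + Λ1*R :=
      add_le_add (hlam0e s i) (mul_le_mul (hlam1e s i) (haR i) (ha i) hΛ1nn)
    calc (lam0 s i + lam1 s i * a i) * (p i - q i)
        ≤ (lam0 s i + lam1 s i * a i) * |p i - q i| :=
          mul_le_mul_of_nonneg_left (le_abs_self _) hnn
      _ ≤ (Λ0 + Λ1*R) * |p i - q i| := mul_le_mul_of_nonneg_right hup (abs_nonneg _)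
  linarith

open Set Filter Topology in
lemma state_nonempty {d N : ℕ} (hd : 0 < d) : Nonempty (State d N) := by
  refine ⟨⟨0, hd⟩, ⟨fun x => if x = ⟨0, hd⟩ then Fin.last N else 0, ?_⟩⟩
  have hval : ∀ x : Fin d,
      (((if x = (⟨0, hd⟩ : Fin d) then Fin.last N else 0 : Fin (N+1))) : ℕ)
        = if x = ⟨0, hd⟩ then N else 0 := by
    intro x; split <;> simp
  simp only [hval, Finset.sum_ite_eq', Finset.mem_univ, if_true]

open Set Filter Topology in
lemma value_bounds {d N : ℕ} (hd : 0 < d) {T : ℝ} (hT : 0 ≤ T)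
    (lam0 lam1 : State d N → Vec d)
    (hlam0 : ∀ s i, 0 ≤ lam0 s i) (hlam1 : ∀ s i, 0 ≤ lam1 s i)
    {ℓ : State d N → Vec d → ℝ} {γ : ℝ} (hγ : 0 < γ)
    (hℓnn : ∀ s a, (∀ i, 0 ≤ a i) → 0 ≤ ℓ s a)
    (hℓconv : StronglyConvex ℓ γ)
    (g : State d N → ℝ) (hg : ∀ s, 0 ≤ g s)
    (β : Ctrl d N) (hβ : ∀ t ∈ Icc (0:ℝ) T, ∀ s i, 0 ≤ β t s i)
    (v : ℝ → State d N → ℝ) (hv : IsHJBSol T lam0 lam1 ℓ g β v) :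
    ∀ t ∈ Icc (0:ℝ) T, ∀ s, 0 ≤ v t s ∧
      v t s ≤ T * (∑ s' : State d N, ℓ s' 0) + ∑ s' : State d N, g s' := by
  haveI : Nonempty (State d N) := state_nonempty hd
  set L0 : ℝ := ∑ s' : State d N, ℓ s' 0 with hL0
  set G0 : ℝ := ∑ s' : State d N, g s' with hG0
  have hL0nn : 0 ≤ L0 := Finset.sum_nonneg fun s _ => hℓnn s 0 (fun i => le_rfl)
  have hG0nn : 0 ≤ G0 := Finset.sum_nonneg fun s _ => hg s
  have hlow : ∀ t ∈ Icc (0:ℝ) T, ∀ s : State d N, (0:ℝ) ≤ v t s := by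
    apply min_principle (f := fun u s => v u s)
      (D := fun u s => -(ham lam0 lam1 ℓ s (delta s.1 fun y => v u (y, s.2))
        + genMu lam0 lam1 β v u s))
    · exact fun t ht s => hv.2 t ht s
    · intro t ht s hmin
      have hham : 0 ≤ ham lam0 lam1 ℓ s (delta s.1 fun y => v t (y, s.2)) := by
        apply Real.sInf_nonneg
        rintro x ⟨a, ha, rfl⟩
        apply add_nonneg (hℓnn s a ha)
        apply Finset.sum_nonneg
        intro i _
        apply mul_nonneg (add_nonneg (hlam0 s i) (mul_nonneg (hlam1 s i) (ha i)))
        exact sub_nonneg.2 (hmin _)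
      have hgen : 0 ≤ genMu lam0 lam1 β v t s := by
        apply Finset.sum_nonneg; intro z _
        apply Finset.sum_nonneg; intro i _
        apply mul_nonneg (Nat.cast_nonneg _)
        apply mul_nonneg (add_nonneg (hlam0 _ _) (mul_nonneg (hlam1 _ _) (hβ t ht _ _)))
        exact sub_nonneg.2 (hmin _)
      linarith
    · intro s; rw [hv.1 s]; exact hg s
  have hup : ∀ t ∈ Icc (0:ℝ) T, ∀ s : State d N,
      (0:ℝ) ≤ (T - t) * L0 + G0 - v t s := by
    apply min_principle (f := fun u s => (T - u) * L0 + G0 - v u s)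
      (D := fun u s => -1 * L0 - (-(ham lam0 lam1 ℓ s (delta s.1 fun y => v u (y, s.2))
        + genMu lam0 lam1 β v u s)))
    · intro t ht s
      have h1 : HasDerivWithinAt (fun u : ℝ => (T - u) * L0 + G0) (-1 * L0) (Icc (0:ℝ) T) t := by
        have h0 := (((hasDerivWithinAt_id t (Icc (0:ℝ) T)).const_sub T).mul_const L0).add_const G0
        simpa using h0
      exact h1.sub (hv.2 t ht s)
    · intro t ht s hmin
      have hvmax : ∀ s', v t s' ≤ v t s := by
        intro s'
        have := hmin s'
        linarith
      have hham : ham lam0 lam1 ℓ s (delta s.1 fun y => v t (y, s.2)) ≤ L0 := by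
        set p := delta s.1 fun y => v t (y, s.2) with hp
        have hmem : (ℓ s 0 + ∑ i, (lam0 s i + lam1 s i * (0:Vec d) i) * p i) ∈
            ((fun a => ℓ s a + ∑ i, (lam0 s i + lam1 s i * a i) * p i) ''
              {a : Vec d | ∀ i, 0 ≤ a i}) := ⟨0, fun i => le_rfl, rfl⟩
        have h1 : ham lam0 lam1 ℓ s p ≤ ℓ s 0 + ∑ i, (lam0 s i + lam1 s i * (0:Vec d) i) * p i :=
          csInf_le (ham_bddBelow lam0 lam1 hγ hℓnn hℓconv s p) hmem
        have h2 : ∑ i, (lam0 s i + lam1 s i * (0:Vec d) i) * p i ≤ 0 := by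
          apply Finset.sum_nonpos; intro i _
          have hpi : p i ≤ 0 := sub_nonpos.2 (hvmax _)
          have h0 : (0:Vec d) i = 0 := rfl
          rw [h0, mul_zero, add_zero]
          exact mul_nonpos_of_nonneg_of_nonpos (hlam0 s i) hpi
        have h3 : ℓ s 0 ≤ L0 :=
          Finset.single_le_sum (fun s' _ => hℓnn s' 0 fun i => le_rfl) (Finset.mem_univ s)
        linarith
      have hgen : genMu lam0 lam1 β v t s ≤ 0 := by
        apply Finset.sum_nonpos; intro z _
        apply Finset.sum_nonpos; intro i _
        apply mul_nonpos_of_nonneg_of_nonpos (Nat.cast_nonneg _)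
        apply mul_nonpos_of_nonneg_of_nonpos
          (add_nonneg (hlam0 _ _) (mul_nonneg (hlam1 _ _) (hβ t ht _ _)))
        exact sub_nonpos.2 (hvmax _)
      linarith
    · intro s
      have hvT : v T s = g s := hv.1 s
      have hgs : g s ≤ G0 := Finset.single_le_sum (fun s' _ => hg s') (Finset.mem_univ s)
      simp only [hvT]
      linarith
  intro t ht s
  refine ⟨hlow t ht s, ?_⟩
  have h := hup t ht s
  have htL : t * L0 ≥ 0 := mul_nonneg ht.1 hL0nn
  linarith

open Set Filter Topology in
set_option maxHeartbeats 4000000 in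
theorem stmt9_value_stability
    {d N : ℕ} (hd : 2 ≤ d) (hN : 1 ≤ N) (T : ℝ) (hT : 0 < T)
    (lam0 lam1 : State d N → Vec d)
    (hlam0 : ∀ s i, 0 ≤ lam0 s i) (hlam1 : ∀ s i, 0 ≤ lam1 s i)
    (ℓ : State d N → Vec d → ℝ) (γ : ℝ) (hγ : 0 < γ)
    (hℓc : ∀ s, Continuous (ℓ s))
    (hℓnn : ∀ s a, (∀ i, 0 ≤ a i) → 0 ≤ ℓ s a)
    (hℓconv : StronglyConvex ℓ γ)
    (g : State d N → ℝ) (hg : ∀ s, 0 ≤ g s)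
 :
    ∃ c : ℝ, 0 < c ∧ ∀ β β' : Ctrl d N,
      AdmStar T lam1 ℓ g γ β → AdmStar T lam1 ℓ g γ β' →
      ∀ v v' : ℝ → State d N → ℝ,
        IsHJBSol T lam0 lam1 ℓ g β v → IsHJBSol T lam0 lam1 ℓ g β' v' →
      ∀ t ∈ Set.Icc (0:ℝ) T,
        valNormSq (fun u s => v u s - v' u s) t ≤
          c * ∫ u in t..T, ctrlNormSq (fun r s i => β' r s i - β r s i) u := by
  classical
  haveI : Nonempty (State d N) := state_nonempty (by omega)
  obtain ⟨Λ0, hΛ0⟩ : ∃ x : ℝ, x = ∑ s' : State d N, ∑ i, lam0 s' i := ⟨_, rfl⟩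
  obtain ⟨Λ1, hΛ1⟩ : ∃ x : ℝ, x = ∑ s' : State d N, ∑ i, lam1 s' i := ⟨_, rfl⟩
  obtain ⟨L0, hL0⟩ : ∃ x : ℝ, x = ∑ s' : State d N, ℓ s' 0 := ⟨_, rfl⟩
  obtain ⟨G0, hG0⟩ : ∃ x : ℝ, x = ∑ s' : State d N, g s' := ⟨_, rfl⟩
  have hΛ0nn : 0 ≤ Λ0 := hΛ0 ▸ Finset.sum_nonneg fun s' _ =>
    Finset.sum_nonneg fun i _ => hlam0 s' i
  have hΛ1nn : 0 ≤ Λ1 := hΛ1 ▸ Finset.sum_nonneg fun s' _ =>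
    Finset.sum_nonneg fun i _ => hlam1 s' i
  have hL0nn : 0 ≤ L0 := hL0 ▸ Finset.sum_nonneg fun s' _ => hℓnn s' 0 (fun i => le_rfl)
  have hG0nn : 0 ≤ G0 := hG0 ▸ Finset.sum_nonneg fun s' _ => hg s'
  have hlam0e : ∀ s' i, lam0 s' i ≤ Λ0 := by
    intro s' i
    rw [hΛ0]
    calc lam0 s' i ≤ ∑ i', lam0 s' i' :=
          Finset.single_le_sum (fun i' _ => hlam0 s' i') (Finset.mem_univ i)
      _ ≤ ∑ s'' : State d N, ∑ i', lam0 s'' i' := Finset.single_le_sum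
          (fun s'' _ => Finset.sum_nonneg fun i' _ => hlam0 s'' i') (Finset.mem_univ s')
  have hlam1e : ∀ s' i, lam1 s' i ≤ Λ1 := by
    intro s' i
    rw [hΛ1]
    calc lam1 s' i ≤ ∑ i', lam1 s' i' :=
          Finset.single_le_sum (fun i' _ => hlam1 s' i') (Finset.mem_univ i)
      _ ≤ ∑ s'' : State d N, ∑ i', lam1 s'' i' := Finset.single_le_sum
          (fun s'' _ => Finset.sum_nonneg fun i' _ => hlam1 s'' i') (Finset.mem_univ s')
  obtain ⟨Vmax, hVmax⟩ : ∃ x : ℝ, x = T * L0 + G0 := ⟨_, rfl⟩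
  have hVnn : 0 ≤ Vmax := by
    rw [hVmax]
    have := mul_nonneg hT.le hL0nn
    linarith
  obtain ⟨CH, hCH0, hCH⟩ := ham_lipschitz lam0 lam1 hlam0 hlam1 hγ hℓnn hℓconv Vmax hVnn
  obtain ⟨CA, hCA⟩ : ∃ x : ℝ, x = max (cA T lam1 ℓ g γ) 0 := ⟨_, rfl⟩
  have hCAnn : 0 ≤ CA := hCA ▸ le_max_right _ _
  obtain ⟨Cg, hCgdef⟩ : ∃ x : ℝ, x = (N:ℝ) * (Λ0 + Λ1 * CA) := ⟨_, rfl⟩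
  have hCgnn : 0 ≤ Cg := hCgdef ▸ mul_nonneg (Nat.cast_nonneg N)
    (add_nonneg hΛ0nn (mul_nonneg hΛ1nn hCAnn))
  obtain ⟨E1, hE1⟩ : ∃ x : ℝ, x = (N:ℝ) * Λ1 * Vmax := ⟨_, rfl⟩
  have hE1nn : 0 ≤ E1 := hE1 ▸ mul_nonneg (mul_nonneg (Nat.cast_nonneg N) hΛ1nn) hVnn
  obtain ⟨dm, hdm⟩ : ∃ x : ℝ, x = ((d-1 : ℕ) : ℝ) := ⟨_, rfl⟩
  have hdmnn : 0 ≤ dm := hdm ▸ Nat.cast_nonneg _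
  obtain ⟨card, hcard⟩ : ∃ x : ℝ, x = (Fintype.card (State d N) : ℝ) := ⟨_, rfl⟩
  have hcardnn : 0 ≤ card := hcard ▸ Nat.cast_nonneg _
  obtain ⟨K, hK⟩ : ∃ x : ℝ, x = card * (4*CH*dm + (d:ℝ)*dm*(4*Cg + E1)) := ⟨_, rfl⟩
  have hKnn : 0 ≤ K := by
    rw [hK]
    have h1 : 0 ≤ 4*CH*dm := by positivity
    have h2 : 0 ≤ (d:ℝ)*dm*(4*Cg + E1) := by positivity
    nlinarith
  obtain ⟨CB2, hCB2⟩ : ∃ x : ℝ, x = card * ((d:ℝ)*dm*E1) := ⟨_, rfl⟩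
  have hCB2nn : 0 ≤ CB2 := by rw [hCB2]; positivity
  refine ⟨Real.exp (K*T) * (CB2 + 1), by positivity, ?_⟩
  intro β β' hβ hβ' v v' hv hv' t ht
  -- entrywise control bounds
  have hctrl : ∀ (α : Ctrl d N),
      (∀ u ∈ Icc (0:ℝ) T, Real.sqrt (ctrlNormSq α u) ≤ cA T lam1 ℓ g γ) →
      ∀ u ∈ Icc (0:ℝ) T, ∀ s i, |α u s i| ≤ CA := by
    intro α hα u hu s i
    have h1 : (α u s i)^2 ≤ ctrlNormSq α u := by
      calc (α u s i)^2 ≤ ∑ i', (α u s i')^2 :=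
            Finset.single_le_sum (f := fun i' => (α u s i')^2)
              (fun _ _ => sq_nonneg _) (Finset.mem_univ i)
        _ ≤ ∑ s' : State d N, ∑ i', (α u s' i')^2 := Finset.single_le_sum
            (f := fun s' => ∑ i', (α u s' i')^2)
            (fun s' _ => Finset.sum_nonneg fun _ _ => sq_nonneg _) (Finset.mem_univ s)
    have h3 : |α u s i| = Real.sqrt ((α u s i)^2) := (Real.sqrt_sq_eq_abs _).symm
    rw [h3, hCA]
    calc Real.sqrt ((α u s i)^2) ≤ Real.sqrt (ctrlNormSq α u) := Real.sqrt_le_sqrt h1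
      _ ≤ cA T lam1 ℓ g γ := hα u hu
      _ ≤ max (cA T lam1 ℓ g γ) 0 := le_max_left _ _
  have hβbd := hctrl β hβ.2
  have hβ'bd := hctrl β' hβ'.2
  -- value bounds
  have hVeq : T * (∑ s' : State d N, ℓ s' 0) + (∑ s' : State d N, g s') = Vmax := by
    rw [hVmax, hL0, hG0]
  have hvb := value_bounds (by omega) hT.le lam0 lam1 hlam0 hlam1 hγ hℓnn hℓconv g hg
    β hβ.1.1 v hv
  have hv'b := value_bounds (by omega) hT.le lam0 lam1 hlam0 hlam1 hγ hℓnn hℓconv g hg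
    β' hβ'.1.1 v' hv'
  have hvV : ∀ u ∈ Icc (0:ℝ) T, ∀ s, 0 ≤ v u s ∧ v u s ≤ Vmax := by
    intro u hu s
    obtain ⟨h1, h2⟩ := hvb u hu s
    exact ⟨h1, by rw [← hVeq]; exact h2⟩
  have hv'V : ∀ u ∈ Icc (0:ℝ) T, ∀ s, 0 ≤ v' u s ∧ v' u s ≤ Vmax := by
    intro u hu s
    obtain ⟨h1, h2⟩ := hv'b u hu s
    exact ⟨h1, by rw [← hVeq]; exact h2⟩
  -- derivative functions
  set DV : ℝ → State d N → ℝ := fun u s =>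
    -(ham lam0 lam1 ℓ s (delta s.1 fun y => v u (y, s.2)) + genMu lam0 lam1 β v u s) with hDV
  set DV' : ℝ → State d N → ℝ := fun u s =>
    -(ham lam0 lam1 ℓ s (delta s.1 fun y => v' u (y, s.2)) + genMu lam0 lam1 β' v' u s) with hDV'
  have hφder : ∀ u ∈ Icc (0:ℝ) T, HasDerivWithinAt (fun r => ∑ s : State d N, (v r s - v' r s)^2)
      (∑ s : State d N, 2 * (v u s - v' u s) * (DV u s - DV' u s)) (Icc (0:ℝ) T) u := by
    intro u hu
    refine HasDerivWithinAt.fun_sum (fun s _ => ?_)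
    have h1 := ((hv.2 u hu s).fun_sub (hv'.2 u hu s)).fun_pow 2
    convert h1 using 1
    rfl
    simp only [hDV, hDV', pow_one]
    push_cast
    ring
  -- nonnegativity of control norm
  have hρnn : ∀ x, 0 ≤ ctrlNormSq (fun r s i => β' r s i - β r s i) x :=
    fun x => Finset.sum_nonneg fun s _ => Finset.sum_nonneg fun i _ => sq_nonneg _
  -- key differential inequality
  have hwsq : ∀ u (s' : State d N),
      (v u s' - v' u s')^2 ≤ ∑ s'' : State d N, (v u s'' - v' u s'')^2 :=
    fun u s' => Finset.single_le_sum (f := fun s'' => (v u s'' - v' u s'')^2)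
      (fun _ _ => sq_nonneg _) (Finset.mem_univ s')
  have hkey : ∀ u ∈ Icc (0:ℝ) T,
      -(K * (∑ s : State d N, (v u s - v' u s)^2)
          + CB2 * ctrlNormSq (fun r s i => β' r s i - β r s i) u)
        ≤ ∑ s : State d N, 2 * (v u s - v' u s) * (DV u s - DV' u s) := by
    intro u hu
    obtain ⟨φu, hφu⟩ : ∃ x : ℝ, x = ∑ s : State d N, (v u s - v' u s)^2 := ⟨_, rfl⟩
    obtain ⟨ρu, hρu⟩ : ∃ x : ℝ, x = ctrlNormSq (fun r s i => β' r s i - β r s i) u := ⟨_, rfl⟩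
    have hρunn : 0 ≤ ρu := hρu ▸ hρnn u
    have hwφ : ∀ s', (v u s' - v' u s')^2 ≤ φu := fun s' => hφu ▸ hwsq u s'
    have hδβ : ∀ (s' : State d N) i, (β' u s' i - β u s' i)^2 ≤ ρu := by
      intro s' i
      rw [hρu]
      calc (β' u s' i - β u s' i)^2 ≤ ∑ i', (β' u s' i' - β u s' i')^2 :=
            Finset.single_le_sum (f := fun i' => (β' u s' i' - β u s' i')^2)
              (fun _ _ => sq_nonneg _) (Finset.mem_univ i)
        _ ≤ ctrlNormSq (fun r s i => β' r s i - β r s i) u := Finset.single_le_sum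
            (f := fun s'' => ∑ i', (β' u s'' i' - β u s'' i')^2)
            (fun s'' _ => Finset.sum_nonneg fun _ _ => sq_nonneg _) (Finset.mem_univ s')
    have per_s : ∀ s : State d N,
        -((4*CH*dm + (d:ℝ)*dm*(4*Cg + E1)) * φu + ((d:ℝ)*dm*E1) * ρu)
          ≤ 2 * (v u s - v' u s) * (DV u s - DV' u s) := by
      intro s
      have hpb : ∀ i, |delta s.1 (fun y => v u (y, s.2)) i| ≤ Vmax := by
        intro i
        have h1 := hvV u hu (idxToState s.1 i, s.2)
        have h2 := hvV u hu s
        have he : delta s.1 (fun y => v u (y, s.2)) i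
            = v u (idxToState s.1 i, s.2) - v u s := rfl
        rw [he, abs_le]
        constructor <;> linarith [h1.1, h1.2, h2.1, h2.2]
      have hqb : ∀ i, |delta s.1 (fun y => v' u (y, s.2)) i| ≤ Vmax := by
        intro i
        have h1 := hv'V u hu (idxToState s.1 i, s.2)
        have h2 := hv'V u hu s
        have he : delta s.1 (fun y => v' u (y, s.2)) i
            = v' u (idxToState s.1 i, s.2) - v' u s := rfl
        rw [he, abs_le]
        constructor <;> linarith [h1.1, h1.2, h2.1, h2.2]
      have hhamabs : |ham lam0 lam1 ℓ s (delta s.1 fun y => v u (y, s.2))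
          - ham lam0 lam1 ℓ s (delta s.1 fun y => v' u (y, s.2))|
          ≤ CH * ∑ i, |delta s.1 (fun y => v u (y, s.2)) i
            - delta s.1 (fun y => v' u (y, s.2)) i| := by
        rw [abs_sub_le_iff]
        constructor
        · exact hCH s _ _ hpb hqb
        · have heq : (∑ i, |delta s.1 (fun y => v' u (y, s.2)) i
              - delta s.1 (fun y => v u (y, s.2)) i|)
              = ∑ i, |delta s.1 (fun y => v u (y, s.2)) i
              - delta s.1 (fun y => v' u (y, s.2)) i| :=
            Finset.sum_congr rfl fun i _ => abs_sub_comm _ _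
          calc ham lam0 lam1 ℓ s (delta s.1 fun y => v' u (y, s.2))
              - ham lam0 lam1 ℓ s (delta s.1 fun y => v u (y, s.2))
              ≤ CH * ∑ i, |delta s.1 (fun y => v' u (y, s.2)) i
                - delta s.1 (fun y => v u (y, s.2)) i| := hCH s _ _ hqb hpb
            _ = _ := by rw [heq]
      have hΔ : ∀ i, delta s.1 (fun y => v u (y, s.2)) i - delta s.1 (fun y => v' u (y, s.2)) i
          = (v u (idxToState s.1 i, s.2) - v' u (idxToState s.1 i, s.2)) - (v u s - v' u s) := by
        intro i
        show (v u (idxToState s.1 i, s.2) - v u (s.1, s.2))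
          - (v' u (idxToState s.1 i, s.2) - v' u (s.1, s.2)) = _
        ring
      have hterm1 : ∀ i ∈ Finset.univ, |2*(v u s - v' u s)|
          * (CH * |delta s.1 (fun y => v u (y, s.2)) i
            - delta s.1 (fun y => v' u (y, s.2)) i|) ≤ CH * (4*φu) := by
        intro i _
        rw [hΔ i]
        exact prod_bound hCH0 (hwφ s) (hwφ (idxToState s.1 i, s.2))
      have hham_tot : |2*(v u s - v' u s)|
          * |ham lam0 lam1 ℓ s (delta s.1 fun y => v u (y, s.2))
            - ham lam0 lam1 ℓ s (delta s.1 fun y => v' u (y, s.2))|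
          ≤ dm * (CH * (4*φu)) := by
        calc |2*(v u s - v' u s)|
            * |ham lam0 lam1 ℓ s (delta s.1 fun y => v u (y, s.2))
              - ham lam0 lam1 ℓ s (delta s.1 fun y => v' u (y, s.2))|
            ≤ |2*(v u s - v' u s)| * (CH * ∑ i, |delta s.1 (fun y => v u (y, s.2)) i
              - delta s.1 (fun y => v' u (y, s.2)) i|) :=
              mul_le_mul_of_nonneg_left hhamabs (abs_nonneg _)
          _ = ∑ i, |2*(v u s - v' u s)| * (CH * |delta s.1 (fun y => v u (y, s.2)) i
              - delta s.1 (fun y => v' u (y, s.2)) i|) := by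
              rw [Finset.mul_sum, Finset.mul_sum]
          _ ≤ ∑ i : Fin (d-1), CH * (4*φu) := Finset.sum_le_sum hterm1
          _ = dm * (CH * (4*φu)) := by
              rw [Finset.sum_const, Finset.card_univ, Fintype.card_fin, nsmul_eq_mul, hdm]
      have hNz : ∀ z : Fin d, ((s.2.1 z : ℕ) : ℝ) ≤ (N:ℝ) := by
        intro z
        have := Nat.lt_succ_iff.mp (s.2.1 z).isLt
        exact_mod_cast this
      have hNz0 : ∀ z : Fin d, (0:ℝ) ≤ ((s.2.1 z : ℕ) : ℝ) := fun z => Nat.cast_nonneg _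
      have hgen_term : ∀ z : Fin d, ∀ i : Fin (d-1), |2*(v u s - v' u s)|
          * |(((s.2.1 z : ℕ) : ℝ) * ((lam0 (z, shift s.2 s.1 z) i
              + lam1 (z, shift s.2 s.1 z) i * β u (z, shift s.2 s.1 z) i)
              * (v u (s.1, shift s.2 (idxToState z i) z) - v u s)))
            - (((s.2.1 z : ℕ) : ℝ) * ((lam0 (z, shift s.2 s.1 z) i
              + lam1 (z, shift s.2 s.1 z) i * β' u (z, shift s.2 s.1 z) i)
              * (v' u (s.1, shift s.2 (idxToState z i) z) - v' u s)))|
          ≤ Cg * (4*φu) + E1 * (φu + ρu) := by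
        intro z i
        obtain ⟨n, hn⟩ : ∃ x : ℝ, x = ((s.2.1 z : ℕ) : ℝ) := ⟨_, rfl⟩
        obtain ⟨c0, hc0⟩ : ∃ x : ℝ, x = lam0 (z, shift s.2 s.1 z) i := ⟨_, rfl⟩
        obtain ⟨c1, hc1⟩ : ∃ x : ℝ, x = lam1 (z, shift s.2 s.1 z) i := ⟨_, rfl⟩
        obtain ⟨b, hb⟩ : ∃ x : ℝ, x = β u (z, shift s.2 s.1 z) i := ⟨_, rfl⟩
        obtain ⟨b', hb'⟩ : ∃ x : ℝ, x = β' u (z, shift s.2 s.1 z) i := ⟨_, rfl⟩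
        rw [← hn, ← hc0, ← hc1, ← hb, ← hb']
        have hn0 : 0 ≤ n := hn ▸ hNz0 z
        have hnN : n ≤ (N:ℝ) := hn ▸ hNz z
        have hc00 : 0 ≤ c0 := hc0 ▸ hlam0 _ _
        have hc10 : 0 ≤ c1 := hc1 ▸ hlam1 _ _
        have hc0e : c0 ≤ Λ0 := hc0 ▸ hlam0e _ _
        have hc1e : c1 ≤ Λ1 := hc1 ▸ hlam1e _ _
        have hb0 : 0 ≤ b := hb ▸ hβ.1.1 u hu _ i
        have hbCA : b ≤ CA := hb ▸ le_trans (le_abs_self _) (hβbd u hu _ i)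
        have hbb' : (b - b')^2 ≤ ρu := by
          calc (b - b')^2 = (b' - b)^2 := by ring
            _ ≤ ρu := by rw [hb, hb']; exact hδβ _ i
        have hVσ : |v' u (s.1, shift s.2 (idxToState z i) z) - v' u s| ≤ Vmax := by
          have h1 := hv'V u hu (s.1, shift s.2 (idxToState z i) z)
          have h2 := hv'V u hu s
          rw [abs_le]
          constructor <;> linarith [h1.1, h1.2, h2.1, h2.2]
        have hid : n * ((c0 + c1 * b) * (v u (s.1, shift s.2 (idxToState z i) z) - v u s))
            - n * ((c0 + c1 * b') * (v' u (s.1, shift s.2 (idxToState z i) z) - v' u s))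
            = (n * (c0 + c1 * b)) * ((v u (s.1, shift s.2 (idxToState z i) z)
                - v' u (s.1, shift s.2 (idxToState z i) z)) - (v u s - v' u s))
              + (n * c1 * (b - b'))
                * (v' u (s.1, shift s.2 (idxToState z i) z) - v' u s) := by ring
        rw [hid]
        have hcoef0 : 0 ≤ n * (c0 + c1 * b) :=
          mul_nonneg hn0 (add_nonneg hc00 (mul_nonneg hc10 hb0))
        have hcoefB : n * (c0 + c1 * b) ≤ Cg := by
          rw [hCgdef]
          have h1 : c0 + c1 * b ≤ Λ0 + Λ1 * CA :=
            add_le_add hc0e (mul_le_mul hc1e hbCA hb0 hΛ1nn)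
          exact mul_le_mul hnN h1 (add_nonneg hc00 (mul_nonneg hc10 hb0)) (Nat.cast_nonneg N)
        have hX : |(n * (c0 + c1 * b)) * ((v u (s.1, shift s.2 (idxToState z i) z)
            - v' u (s.1, shift s.2 (idxToState z i) z)) - (v u s - v' u s))|
            ≤ Cg * |(v u (s.1, shift s.2 (idxToState z i) z)
            - v' u (s.1, shift s.2 (idxToState z i) z)) - (v u s - v' u s)| := by
          rw [abs_mul, abs_of_nonneg hcoef0]
          exact mul_le_mul_of_nonneg_right hcoefB (abs_nonneg _)
        have hY : |(n * c1 * (b - b')) * (v' u (s.1, shift s.2 (idxToState z i) z) - v' u s)|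
            ≤ E1 * |b - b'| := by
          rw [abs_mul, abs_mul, abs_mul, abs_of_nonneg hn0, abs_of_nonneg hc10]
          calc n * c1 * |b - b'| * |v' u (s.1, shift s.2 (idxToState z i) z) - v' u s|
              ≤ (N:ℝ) * Λ1 * |b - b'| * Vmax := by
                apply mul_le_mul
                · exact mul_le_mul (mul_le_mul hnN hc1e hc10 (Nat.cast_nonneg N))
                    le_rfl (abs_nonneg _) (mul_nonneg (Nat.cast_nonneg N) hΛ1nn)
                · exact hVσ
                · exact abs_nonneg _
                · positivity
            _ = E1 * |b - b'| := by rw [hE1]; ring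
        calc |2*(v u s - v' u s)| * |(n * (c0 + c1 * b))
              * ((v u (s.1, shift s.2 (idxToState z i) z)
                - v' u (s.1, shift s.2 (idxToState z i) z)) - (v u s - v' u s))
              + (n * c1 * (b - b')) * (v' u (s.1, shift s.2 (idxToState z i) z) - v' u s)|
            ≤ |2*(v u s - v' u s)| * (|(n * (c0 + c1 * b))
              * ((v u (s.1, shift s.2 (idxToState z i) z)
                - v' u (s.1, shift s.2 (idxToState z i) z)) - (v u s - v' u s))|
              + |(n * c1 * (b - b')) * (v' u (s.1, shift s.2 (idxToState z i) z) - v' u s)|) :=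
              mul_le_mul_of_nonneg_left (abs_add_le _ _) (abs_nonneg _)
          _ ≤ |2*(v u s - v' u s)| * (Cg * |(v u (s.1, shift s.2 (idxToState z i) z)
              - v' u (s.1, shift s.2 (idxToState z i) z)) - (v u s - v' u s)|
              + E1 * |b - b'|) :=
              mul_le_mul_of_nonneg_left (add_le_add hX hY) (abs_nonneg _)
          _ = |2*(v u s - v' u s)| * (Cg * |(v u (s.1, shift s.2 (idxToState z i) z)
              - v' u (s.1, shift s.2 (idxToState z i) z)) - (v u s - v' u s)|)
              + E1 * (|2*(v u s - v' u s)| * |b - b'|) := by ring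
          _ ≤ Cg * (4*φu) + E1 * (φu + ρu) := by
              have hA := prod_bound hCgnn (hwφ s) (hwφ (s.1, shift s.2 (idxToState z i) z))
              have hB := prod_bound2 (hwφ s) hbb'
              have hB2 := mul_le_mul_of_nonneg_left hB hE1nn
              linarith
      have hgen_tot : |2*(v u s - v' u s)|
          * |genMu lam0 lam1 β v u s - genMu lam0 lam1 β' v' u s|
          ≤ (d:ℝ) * dm * (Cg * (4*φu) + E1 * (φu + ρu)) := by
        obtain ⟨F, hF⟩ : ∃ F : Fin d → Fin (d-1) → ℝ, F = fun z i =>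
            ((((s.2.1 z : ℕ) : ℝ) * ((lam0 (z, shift s.2 s.1 z) i
              + lam1 (z, shift s.2 s.1 z) i * β u (z, shift s.2 s.1 z) i)
              * (v u (s.1, shift s.2 (idxToState z i) z) - v u s)))
            - (((s.2.1 z : ℕ) : ℝ) * ((lam0 (z, shift s.2 s.1 z) i
              + lam1 (z, shift s.2 s.1 z) i * β' u (z, shift s.2 s.1 z) i)
              * (v' u (s.1, shift s.2 (idxToState z i) z) - v' u s)))) := ⟨_, rfl⟩
        have hsplit : genMu lam0 lam1 β v u s - genMu lam0 lam1 β' v' u s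
            = ∑ z : Fin d, ∑ i : Fin (d-1), F z i := by
          simp only [hF, genMu]
          rw [← Finset.sum_sub_distrib]
          refine Finset.sum_congr rfl fun z _ => ?_
          rw [← Finset.sum_sub_distrib]
        have habs : |∑ z : Fin d, ∑ i : Fin (d-1), F z i|
            ≤ ∑ z : Fin d, ∑ i : Fin (d-1), |F z i| :=
          le_trans (Finset.abs_sum_le_sum_abs _ _)
            (Finset.sum_le_sum fun z _ => Finset.abs_sum_le_sum_abs _ _)
        rw [hsplit]
        calc |2*(v u s - v' u s)| * |∑ z : Fin d, ∑ i : Fin (d-1), F z i|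
            ≤ |2*(v u s - v' u s)| * ∑ z : Fin d, ∑ i : Fin (d-1), |F z i| :=
              mul_le_mul_of_nonneg_left habs (abs_nonneg _)
          _ = ∑ z : Fin d, ∑ i : Fin (d-1), |2*(v u s - v' u s)| * |F z i| := by
              rw [Finset.mul_sum]
              exact Finset.sum_congr rfl fun z _ => by rw [Finset.mul_sum]
          _ ≤ ∑ z : Fin d, ∑ i : Fin (d-1), (Cg * (4*φu) + E1 * (φu + ρu)) :=
              Finset.sum_le_sum fun z _ => Finset.sum_le_sum fun i _ => by
                simp only [hF]
                exact hgen_term z i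
          _ = (d:ℝ) * dm * (Cg * (4*φu) + E1 * (φu + ρu)) := by
              rw [Finset.sum_const, Finset.sum_const, Finset.card_univ, Finset.card_univ,
                Fintype.card_fin, Fintype.card_fin, smul_smul, nsmul_eq_mul, Nat.cast_mul, hdm]
      have hds : 2*(v u s - v' u s) * (DV u s - DV' u s)
          = -(2*(v u s - v' u s) * (ham lam0 lam1 ℓ s (delta s.1 fun y => v u (y, s.2))
              - ham lam0 lam1 ℓ s (delta s.1 fun y => v' u (y, s.2))))
            - 2*(v u s - v' u s) * (genMu lam0 lam1 β v u s - genMu lam0 lam1 β' v' u s) := by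
        simp only [hDV, hDV']
        ring
      have ha1 : -(|2*(v u s - v' u s)| * |ham lam0 lam1 ℓ s (delta s.1 fun y => v u (y, s.2))
          - ham lam0 lam1 ℓ s (delta s.1 fun y => v' u (y, s.2))|)
          ≤ -(2*(v u s - v' u s) * (ham lam0 lam1 ℓ s (delta s.1 fun y => v u (y, s.2))
            - ham lam0 lam1 ℓ s (delta s.1 fun y => v' u (y, s.2)))) := by
        rw [← abs_mul]
        exact neg_le_neg (le_abs_self _)
      have ha2 : -(|2*(v u s - v' u s)|
          * |genMu lam0 lam1 β v u s - genMu lam0 lam1 β' v' u s|)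
          ≤ -(2*(v u s - v' u s) * (genMu lam0 lam1 β v u s - genMu lam0 lam1 β' v' u s)) := by
        rw [← abs_mul]
        exact neg_le_neg (le_abs_self _)
      rw [hds]
      nlinarith [hham_tot, hgen_tot, ha1, ha2]
    calc -(K * (∑ s : State d N, (v u s - v' u s)^2)
          + CB2 * ctrlNormSq (fun r s i => β' r s i - β r s i) u)
        = ∑ s : State d N, -((4*CH*dm + (d:ℝ)*dm*(4*Cg + E1)) * φu + ((d:ℝ)*dm*E1) * ρu) := by
          rw [Finset.sum_const, Finset.card_univ, nsmul_eq_mul, ← hcard, ← hφu, ← hρu,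
            hK, hCB2]
          ring
      _ ≤ ∑ s : State d N, 2 * (v u s - v' u s) * (DV u s - DV' u s) :=
          Finset.sum_le_sum fun s _ => per_s s
  -- continuity of the control gap
  obtain ⟨Kl, hKl⟩ := hβ.1.2
  obtain ⟨Kl', hKl'⟩ := hβ'.1.2
  have hρcont : ContinuousOn (fun x => ctrlNormSq (fun r s i => β' r s i - β r s i) x)
      (Icc (0:ℝ) T) := by
    apply continuousOn_finset_sum
    intro s _
    apply continuousOn_finset_sum
    intro i _
    exact (((hKl' s i).continuousOn).sub ((hKl s i).continuousOn)).pow 2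
  set clamp : ℝ → ℝ := fun x => max 0 (min x T) with hclamp
  have hclampc : Continuous clamp := continuous_const.max (continuous_id.min continuous_const)
  have hclampmem : ∀ x, clamp x ∈ Icc (0:ℝ) T := by
    intro x
    exact ⟨le_max_left _ _, max_le hT.le (min_le_right _ _)⟩
  have hclampid : ∀ x ∈ Icc (0:ℝ) T, clamp x = x := by
    intro x hx
    simp only [hclamp]
    rw [min_eq_left hx.2, max_eq_right hx.1]
  set ρb : ℝ → ℝ := fun x => ctrlNormSq (fun r s i => β' r s i - β r s i) (clamp x) with hρbdef
  have hρbc : Continuous ρb := hρcont.comp_continuous hclampc hclampmem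
  have hρbeq : ∀ x ∈ Icc (0:ℝ) T, ρb x = ctrlNormSq (fun r s i => β' r s i - β r s i) x := by
    intro x hx
    simp only [hρbdef]
    rw [hclampid x hx]
  set Rint : ℝ → ℝ := fun r => ∫ x in (0:ℝ)..r, ρb x with hRintdef
  have hRd : ∀ x, HasDerivAt Rint (ρb x) x := by
    intro x
    exact intervalIntegral.integral_hasDerivAt_right (hρbc.intervalIntegrable _ _)
      (hρbc.stronglyMeasurableAtFilter _ _) hρbc.continuousAt
  set mfun : ℝ → ℝ := fun r => Real.exp (K*r) * (∑ s : State d N, (v r s - v' r s)^2)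
    + (Real.exp (K*T)*CB2) * Rint r with hmfun
  have hmder : ∀ u ∈ Icc (0:ℝ) T, HasDerivWithinAt mfun
      (Real.exp (K*u) * (K*1) * (∑ s : State d N, (v u s - v' u s)^2)
        + Real.exp (K*u) * (∑ s : State d N, 2 * (v u s - v' u s) * (DV u s - DV' u s))
        + (Real.exp (K*T)*CB2) * ρb u) (Icc (0:ℝ) T) u := by
    intro u hu
    have h1 : HasDerivAt (fun r => Real.exp (K*r)) (Real.exp (K*u) * (K*1)) u :=
      ((hasDerivAt_id u).const_mul K).exp
    have h2 := (h1.hasDerivWithinAt.mul (hφder u hu)).add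
      (((hRd u).hasDerivWithinAt).const_mul (Real.exp (K*T)*CB2))
    exact h2
  have hmpos : ∀ u ∈ Icc (0:ℝ) T,
      0 ≤ Real.exp (K*u) * (K*1) * (∑ s : State d N, (v u s - v' u s)^2)
        + Real.exp (K*u) * (∑ s : State d N, 2 * (v u s - v' u s) * (DV u s - DV' u s))
        + (Real.exp (K*T)*CB2) * ρb u := by
    intro u hu
    have hk := hkey u hu
    have he1 : Real.exp (K*u) ≤ Real.exp (K*T) :=
      Real.exp_le_exp.2 (mul_le_mul_of_nonneg_left hu.2 hKnn)
    have he0 : (0:ℝ) < Real.exp (K*u) := Real.exp_pos _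
    rw [hρbeq u hu]
    have hf1 := mul_le_mul_of_nonneg_left hk he0.le
    have hf2 : 0 ≤ CB2 * ctrlNormSq (fun r s i => β' r s i - β r s i) u
        * (Real.exp (K*T) - Real.exp (K*u)) :=
      mul_nonneg (mul_nonneg hCB2nn (hρnn u)) (by linarith)
    nlinarith [hf1, hf2]
  have hmono := min_principle (ι := Unit) (t0 := (0:ℝ)) (T := T)
    (fun r _ => -(mfun r))
    (fun r _ => -(Real.exp (K*r) * (K*1) * (∑ s : State d N, (v r s - v' r s)^2)
      + Real.exp (K*r) * (∑ s : State d N, 2 * (v r s - v' r s) * (DV r s - DV' r s))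
      + (Real.exp (K*T)*CB2) * ρb r))
    (fun u hu _ => (hmder u hu).neg)
    (fun u hu _ _ => neg_nonpos.2 (hmpos u hu))
    (b := -(mfun T)) (fun _ => le_rfl)
  have hmt : mfun t ≤ mfun T :=
    neg_le_neg_iff.mp (hmono t ht PUnit.unit)
  have hφT : (∑ s : State d N, (v T s - v' T s)^2) = 0 := by
    apply Finset.sum_eq_zero
    intro s _
    rw [hv.1 s, hv'.1 s]
    ring
  have hint1 : Rint T - Rint t = ∫ x in t..T, ρb x :=
    intervalIntegral.integral_interval_sub_left (hρbc.intervalIntegrable _ _)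
      (hρbc.intervalIntegrable _ _)
  have hint2 : (∫ x in t..T, ρb x)
      = ∫ x in t..T, ctrlNormSq (fun r s i => β' r s i - β r s i) x := by
    apply intervalIntegral.integral_congr
    intro x hx
    rw [uIcc_of_le ht.2] at hx
    exact hρbeq x ⟨le_trans ht.1 hx.1, hx.2⟩
  have hint3 : 0 ≤ ∫ x in t..T, ctrlNormSq (fun r s i => β' r s i - β r s i) x :=
    intervalIntegral.integral_nonneg ht.2 (fun x _ => hρnn x)
  have hExp1 : 1 ≤ Real.exp (K*t) := Real.one_le_exp (mul_nonneg hKnn ht.1)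
  have hφtnn : 0 ≤ ∑ s : State d N, (v t s - v' t s)^2 :=
    Finset.sum_nonneg fun _ _ => sq_nonneg _
  have hmt' : Real.exp (K*t) * (∑ s : State d N, (v t s - v' t s)^2)
      + (Real.exp (K*T)*CB2) * Rint t ≤ (Real.exp (K*T)*CB2) * Rint T := by
    have h1 : mfun T = Real.exp (K*T) * (∑ s : State d N, (v T s - v' T s)^2)
        + (Real.exp (K*T)*CB2) * Rint T := rfl
    rw [hφT, mul_zero, zero_add] at h1
    have h2 : mfun t = Real.exp (K*t) * (∑ s : State d N, (v t s - v' t s)^2)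
        + (Real.exp (K*T)*CB2) * Rint t := rfl
    rw [h1, h2] at hmt
    exact hmt
  have hfinal : (∑ s : State d N, (v t s - v' t s)^2)
      ≤ (Real.exp (K*T)*CB2) * (Rint T - Rint t) := by
    have h1 : (∑ s : State d N, (v t s - v' t s)^2)
        ≤ Real.exp (K*t) * (∑ s : State d N, (v t s - v' t s)^2) :=
      le_mul_of_one_le_left hφtnn hExp1
    nlinarith [hmt']
  have hvns : valNormSq (fun u s => v u s - v' u s) t
      = ∑ s : State d N, (v t s - v' t s)^2 := rfl
  rw [hvns]
  calc (∑ s : State d N, (v t s - v' t s)^2)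
      ≤ (Real.exp (K*T)*CB2) * (Rint T - Rint t) := hfinal
    _ = (Real.exp (K*T)*CB2) * ∫ x in t..T, ctrlNormSq (fun r s i => β' r s i - β r s i) x := by
        rw [hint1, hint2]
    _ ≤ (Real.exp (K*T) * (CB2 + 1))
        * ∫ x in t..T, ctrlNormSq (fun r s i => β' r s i - β r s i) x := by
        apply mul_le_mul_of_nonneg_right _ hint3
        have := Real.exp_pos (K*T)
        nlinarith


end NLLGame
end
end

section
/- Suppose m_1(t) ≤ c(T−t) for all t ∈ [0,T] and, for every n ≥ 1 and t ∈ [0,T], m_{n+1}(t) ≤ c [ Σ_{k=0}^{n−1} ρ̄^k ∫_t^T m_{n−k}(s) ds + ρ̄ⁿ (T−t) ]. Then for all n ≥ 1 and t ∈ [0,T], m_n(t) ≤ ρ̄ⁿ Σ_{k=1}^n (1/k!) C(n−1,k−1) (c(T−t)/ρ̄)^k, where C(n,k) denotes the binomial coefficient. -/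
open scoped BigOperators Classical

noncomputable section

namespace NLLGame

variable {d N : ℕ}

private lemma gronwall_hockey (p j : ℕ) :
    ∑ i ∈ Finset.range p, (i.choose j) = p.choose (j+1) := by
  induction p with
  | zero => simp
  | succ p ih => rw [Finset.sum_range_succ, ih, Nat.choose_succ_succ]; exact Nat.add_comm _ _

private lemma gronwall_integ (T t : ℝ) (j : ℕ) :
    ∫ s in t..T, (T - s)^j = (T - t)^(j+1) / ((j:ℝ)+1) := by
  rw [intervalIntegral.integral_comp_sub_left (fun x => x ^ j) T]
  simp [integral_pow]

private def Dfun (T c ρ : ℝ) (p : ℕ) (t : ℝ) : ℝ :=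
  ∑ j ∈ Finset.range (p+1),
    (((j+1).factorial : ℝ))⁻¹ * (p.choose j : ℝ) * c^(j+1) * (ρ^p / ρ^j) * (T - t)^(j+1)

private lemma Dfun_cont (T c ρ : ℝ) (p : ℕ) : Continuous (Dfun T c ρ p) := by
  unfold Dfun
  exact continuous_finset_sum _ fun j _ => by fun_prop

private lemma Dfun_integral (T c ρ : ℝ) (p : ℕ) (t : ℝ) :
    ∫ s in t..T, Dfun T c ρ p s
      = ∑ j ∈ Finset.range (p+1),
        (((j+1).factorial : ℝ))⁻¹ * (p.choose j : ℝ) * c^(j+1) * (ρ^p / ρ^j) *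
          ((T - t)^(j+2) / ((j:ℝ)+2)) := by
  unfold Dfun
  rw [intervalIntegral.integral_finset_sum]
  · refine Finset.sum_congr rfl fun j _ => ?_
    rw [intervalIntegral.integral_const_mul, gronwall_integ]
    push_cast
    ring
  · intro j _
    apply Continuous.intervalIntegrable
    fun_prop

private lemma Dfun_rec (T c ρ : ℝ) (hρ0 : ρ ≠ 0) (q : ℕ) (t : ℝ) :
    c * ((∑ k ∈ Finset.range (q+1), ρ^k * ∫ s in t..T, Dfun T c ρ (q-k) s) + ρ^(q+1) * (T - t))
      = Dfun T c ρ (q+1) t := by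
  have hsum : ∀ j : ℕ, ∑ k ∈ Finset.range (q+1), (((q-k).choose j : ℕ) : ℝ)
      = (((q+1).choose (j+1) : ℕ) : ℝ) := by
    intro j
    have h := Finset.sum_range_reflect (fun i => ((i.choose j : ℕ) : ℝ)) (q+1)
    simp only [Nat.add_sub_cancel] at h
    rw [h]
    exact_mod_cast gronwall_hockey (q+1) j
  have step1 : ∀ k ∈ Finset.range (q+1),
      ρ^k * ∫ s in t..T, Dfun T c ρ (q-k) s
        = ∑ j ∈ Finset.range (q+1),
            (((q-k).choose j : ℕ) : ℝ) *
              (ρ^q * (((j+1).factorial : ℝ))⁻¹ * c^(j+1) * (ρ^j)⁻¹ *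
                ((T - t)^(j+2) / ((j:ℝ)+2))) := by
    intro k hk
    rw [Finset.mem_range] at hk
    rw [Dfun_integral, Finset.mul_sum]
    rw [Finset.sum_subset (Finset.range_subset_range.mpr (by omega : q - k + 1 ≤ q + 1))
      (by
        intro j hj hj2
        rw [Finset.mem_range] at hj hj2
        push_neg at hj2
        have : q - k < j := by omega
        simp [Nat.choose_eq_zero_of_lt this])]
    refine Finset.sum_congr rfl fun j hj => ?_
    have hpow : ρ^k * ρ^(q-k) = ρ^q := by rw [← pow_add]; congr 1; omega
    rw [← hpow]; ring
  rw [Finset.sum_congr rfl step1, Finset.sum_comm]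
  have step2 : ∀ j ∈ Finset.range (q+1),
      (∑ k ∈ Finset.range (q+1), (((q-k).choose j : ℕ) : ℝ) *
          (ρ^q * (((j+1).factorial : ℝ))⁻¹ * c^(j+1) * (ρ^j)⁻¹ *
            ((T - t)^(j+2) / ((j:ℝ)+2))))
        = (((q+1).choose (j+1) : ℕ) : ℝ) *
            (ρ^q * (((j+1).factorial : ℝ))⁻¹ * c^(j+1) * (ρ^j)⁻¹ *
              ((T - t)^(j+2) / ((j:ℝ)+2))) := by
    intro j _
    rw [← Finset.sum_mul, hsum j]
  rw [Finset.sum_congr rfl step2]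
  unfold Dfun
  rw [mul_add]
  conv_rhs => rw [Finset.sum_range_succ']
  congr 1
  · rw [Finset.mul_sum]
    refine Finset.sum_congr rfl fun j _ => ?_
    have hfac : (((j+1)+1).factorial : ℝ) = ((j:ℝ)+2) * ((j+1).factorial : ℝ) := by
      rw [Nat.factorial_succ]; push_cast; ring
    have hne1 : (((j+1).factorial : ℝ)) ≠ 0 := Nat.cast_ne_zero.mpr (Nat.factorial_ne_zero _)
    have hne2 : ((j:ℝ)+2) ≠ 0 := by positivity
    rw [hfac]
    field_simp
    ring
  · simp [Nat.factorial]; ring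

theorem stmt11_weighted_gronwall_iteration (T c ρ : ℝ) (hT : 0 < T) (hc : 0 < c)
    (hρ : ρ ∈ Set.Ioo (0:ℝ) 1)
    (m : ℕ → ℝ → ℝ)
    (hmc : ∀ n, 1 ≤ n → ContinuousOn (m n) (Set.Icc 0 T))
    (hmnn : ∀ n, 1 ≤ n → ∀ t ∈ Set.Icc (0:ℝ) T, 0 ≤ m n t)
    (h1 : ∀ t ∈ Set.Icc (0:ℝ) T, m 1 t ≤ c * (T - t))
    (hrec : ∀ n, 1 ≤ n → ∀ t ∈ Set.Icc (0:ℝ) T,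
      m (n + 1) t ≤ c * ((∑ k ∈ Finset.range n, ρ ^ k * ∫ s in t..T, m (n - k) s) +
        ρ ^ n * (T - t))) :
    ∀ n, 1 ≤ n → ∀ t ∈ Set.Icc (0:ℝ) T,
      m n t ≤ ρ ^ n * ∑ k ∈ Finset.Icc 1 n,
        (1 / (k.factorial : ℝ)) * ((n - 1).choose (k - 1) : ℝ) * (c * (T - t) / ρ) ^ k := by
  have hρ0 : ρ ≠ 0 := ne_of_gt hρ.1
  have key : ∀ p : ℕ, ∀ t ∈ Set.Icc (0:ℝ) T, m (p+1) t ≤ Dfun T c ρ p t := by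
    intro p
    induction p using Nat.strong_induction_on with
    | _ p ih =>
      obtain _ | q := p
      · intro t ht
        simpa [Dfun, Nat.factorial] using h1 t ht
      · intro t ht
        have hre := hrec (q+1) (by omega) t ht
        have hmono : ∀ k ∈ Finset.range (q+1),
            ρ^k * ∫ s in t..T, m (q+1-k) s ≤ ρ^k * ∫ s in t..T, Dfun T c ρ (q-k) s := by
          intro k hk
          rw [Finset.mem_range] at hk
          have hidx : q + 1 - k = (q - k) + 1 := by omega
          rw [hidx]
          apply mul_le_mul_of_nonneg_left _ (pow_nonneg (le_of_lt hρ.1) k)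
          apply intervalIntegral.integral_mono_on ht.2
          · apply ContinuousOn.intervalIntegrable
            apply (hmc ((q-k)+1) (by omega)).mono
            rw [Set.uIcc_of_le ht.2]
            exact Set.Icc_subset_Icc ht.1 le_rfl
          · exact (Dfun_cont T c ρ (q-k)).intervalIntegrable _ _
          · intro s hs
            exact ih (q-k) (by omega) s ⟨le_trans ht.1 hs.1, hs.2⟩
        calc m (q+1+1) t ≤ _ := hre
          _ ≤ c * ((∑ k ∈ Finset.range (q+1), ρ^k * ∫ s in t..T, Dfun T c ρ (q-k) s)
                + ρ^(q+1) * (T-t)) := by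
              apply mul_le_mul_of_nonneg_left _ (le_of_lt hc)
              exact add_le_add_left (Finset.sum_le_sum hmono) _
          _ = Dfun T c ρ (q+1) t := Dfun_rec T c ρ hρ0 q t
  intro n hn t ht
  obtain ⟨p, rfl⟩ : ∃ p, n = p + 1 := ⟨n - 1, by omega⟩
  refine (key p t ht).trans_eq ?_
  rw [← Finset.Ico_add_one_right_eq_Icc, Finset.sum_Ico_eq_sum_range]
  simp only [Nat.add_sub_cancel]
  rw [Finset.mul_sum]
  unfold Dfun
  refine Finset.sum_congr rfl fun j hj => ?_
  rw [Finset.mem_range] at hj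
  simp only [Nat.add_comm 1 j, Nat.add_sub_cancel]
  have hne1 : (((j+1).factorial : ℝ)) ≠ 0 := Nat.cast_ne_zero.mpr (Nat.factorial_ne_zero _)
  have hne2 : ρ^j ≠ 0 := pow_ne_zero _ hρ0
  have hne3 : ρ^(j+1) ≠ 0 := pow_ne_zero _ hρ0
  rw [div_pow, mul_pow]
  field_simp
  ring


end NLLGame
end
end
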